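/- arXiv:1111.5458 — 4 statements merged into one kernel-verified Lean document; each statement's English description precedes it below -/
import Mathlib

section
/- Let G be a complete multipartite graph with every part of size at most 3. Let the set of parts of G be partitioned into four classes 𝒜, ℬ, 𝒞, 𝒮 such that 𝒜 contains only parts of size 1, ℬ only parts of size 2, 𝒞 only parts of size 3, and 𝒮 only parts of size 1 or 2; let k₁ = |𝒜|, k₂ = |ℬ|, k₃ = |𝒞|, s = |𝒮|, and fix orderings 𝒜 = (A₁, …, A_{k₁}) and 𝒮 = (S₁, …, S_s). For 1 ≤ i ≤ s set v_S(i) = 1 + Σ_{1 ≤ j < i} |S_j|. Suppose f : V(G) → ℕ satisfies: (1) f(v) ≥ k₃ + k₂ + i for all 1 ≤ i ≤ k₁ and v ∈ A_i; (1') f(v) ≥ 2k₃ + k₂ + k₁ + v_S(i) for all 1 ≤ i ≤ s and v ∈ S_i; (2.1) f(v) ≥ k₃ + k₂ for all v in any B ∈ ℬ; (2.2) Σ_{v∈B} f(v) ≥ |V(G)| for all B ∈ ℬ; (3.1) f(v) ≥ k₃ + k₂ for all v in any C ∈ 𝒞; (3.2) f(u) + f(v) ≥ |V(G)| − 1 for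 all distinct u, v in any C ∈ 𝒞; (3.3) Σ_{v∈C} f(v) ≥ |V(G)| − 1 + k₃ + k₂ + k₁ for all C ∈ 𝒞. Then G is on-line f-choosable. -/
variable {V : Type} [Fintype V] [DecidableEq V]

/-- Approximations to on-line `f`-choosability of the subgraph of `G` induced on `S`:
`OnlineChoosableAux G n S f` says that the defining recursion certifies choosability
within `n` unfoldings. -/
def OnlineChoosableAux (G : SimpleGraph V) : ℕ → Finset V → (V → ℕ) → Prop
  | 0, _S, _f => False
  | n + 1, S, f =>
      ((∀ u ∈ S, ∀ v ∈ S, ¬ G.Adj u v) ∧ ∀ v ∈ S, 1 ≤ f v) ∨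
      ((∃ u ∈ S, ∃ v ∈ S, G.Adj u v) ∧
        ∀ U : Finset V, U ⊆ S → U.Nonempty →
          ∃ I : Finset V, I ⊆ U ∧ (∀ u ∈ I, ∀ v ∈ I, ¬ G.Adj u v) ∧
            OnlineChoosableAux G n (S \ I) (fun v => f v - if v ∈ U then 1 else 0))

/-- The subgraph of `G` induced on `S` is on-line `f`-choosable: the least fixed point of
the recursion “if edgeless then `f ≥ 1` everywhere, else for every nonempty `U ⊆ S`
there is an independent `I ⊆ U` with `G - I` on-line `(f - δ_U)`-choosable”. -/
def OnlineChoosable (G : SimpleGraph V) (S : Finset V) (f : V → ℕ) : Prop :=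
  ∃ n, OnlineChoosableAux G n S f

set_option linter.unusedSectionVars false


section ListLemmas
variable {α : Type*}

lemma split_snoc {L l1 l2 : List α} {q r : α} (h : L ++ [q] = l1 ++ r :: l2) :
    (∃ l2', l2 = l2' ++ [q] ∧ L = l1 ++ r :: l2') ∨ (l1 = L ∧ r = q ∧ l2 = []) := by
  rcases List.eq_nil_or_concat l2 with rfl | ⟨l2', x, rfl⟩
  · right
    have h2 : L ++ [q] = l1 ++ [r] := h
    have := List.append_inj' h2 rfl
    exact ⟨this.1.symm, by simpa using this.2.symm, rfl⟩
  · left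
    have h2 : L ++ [q] = (l1 ++ r :: l2') ++ [x] := by simp [h]
    have := List.append_inj' h2 rfl
    exact ⟨l2', by simp [this.2], this.1⟩

lemma split_cons {L l1 l2 : List α} {q r : α} (h : q :: L = l1 ++ r :: l2) :
    (l1 = [] ∧ r = q ∧ l2 = L) ∨ (∃ t, l1 = q :: t ∧ L = t ++ r :: l2) := by
  cases l1 with
  | nil =>
    left
    simp only [List.nil_append, List.cons.injEq] at h
    exact ⟨rfl, h.1.symm, h.2.symm⟩
  | cons a t =>
    right
    simp only [List.cons_append, List.cons.injEq] at h
    exact ⟨t, by simp [h.1], h.2⟩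

/-- Splitting an equation `s1 ++ x :: s2 = l1 ++ r :: l2`. -/
lemma split_middle {s1 s2 l1 l2 : List α} {x r : α} (h : s1 ++ x :: s2 = l1 ++ r :: l2) :
    (∃ t, s1 = l1 ++ r :: t ∧ l2 = t ++ x :: s2) ∨ (l1 = s1 ∧ r = x ∧ l2 = s2) ∨
      (∃ t, l1 = s1 ++ x :: t ∧ s2 = t ++ r :: l2) := by
  rcases List.append_eq_append_iff.1 h with ⟨a', ha1, ha2⟩ | ⟨c', hc1, hc2⟩
  · -- l1 = s1 ++ a', x :: s2 = a' ++ r :: l2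
    cases a' with
    | nil => right; left; simp at ha1 ha2; exact ⟨ha1, ha2.1.symm, ha2.2.symm⟩
    | cons b t =>
      right; right
      simp only [List.cons_append, List.cons.injEq] at ha2
      exact ⟨t, by simp [ha1, ha2.1], ha2.2⟩
  · -- s1 = l1 ++ c', r :: l2 = c' ++ x :: s2
    cases c' with
    | nil => right; left; simp at hc1 hc2; exact ⟨hc1.symm, hc2.1, hc2.2⟩
    | cons b t =>
      left
      simp only [List.cons_append, List.cons.injEq] at hc2
      exact ⟨t, by simp [hc1, hc2.1], hc2.2⟩

lemma split_two {m1 m2 l1 l2 : List α} {r : α} (h : m1 ++ m2 = l1 ++ r :: l2) :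
    (∃ t, m1 = l1 ++ r :: t ∧ l2 = t ++ m2) ∨ (∃ t, l1 = m1 ++ t ∧ m2 = t ++ r :: l2) := by
  rcases List.append_eq_append_iff.1 h with ⟨a', ha1, ha2⟩ | ⟨c', hc1, hc2⟩
  · exact Or.inr ⟨a', ha1, ha2⟩
  · cases c' with
    | nil => right; exact ⟨[], by simp [hc1], by simpa using hc2.symm⟩
    | cons b t =>
      simp only [List.cons_append, List.cons.injEq] at hc2
      exact Or.inl ⟨t, by simp [hc1, hc2.1], hc2.2⟩

lemma first_split (Q : α → Prop) :
    ∀ (l : List α), (∃ x ∈ l, Q x) → ∃ l1 x l2, l = l1 ++ x :: l2 ∧ Q x ∧ ∀ y ∈ l1, ¬ Q y := by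
  intro l
  induction l with
  | nil => rintro ⟨x, hx, -⟩; simp at hx
  | cons a t ih =>
    intro hex
    by_cases ha : Q a
    · exact ⟨[], a, t, rfl, ha, by simp⟩
    · have : ∃ x ∈ t, Q x := by
        rcases hex with ⟨x, hx, hQ⟩
        rcases List.mem_cons.1 hx with rfl | hx
        · exact absurd hQ ha
        · exact ⟨x, hx, hQ⟩
      rcases ih this with ⟨l1, x, l2, rfl, hQ, hall⟩
      refine ⟨a :: l1, x, l2, rfl, hQ, ?_⟩
      intro y hy
      rcases List.mem_cons.1 hy with rfl | hy
      · exact ha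
      · exact hall y hy

lemma sum_map_card_const {c : ℕ} : ∀ (L : List (Finset V)), (∀ p ∈ L, p.card = c) →
    (L.map Finset.card).sum = c * L.length := by
  intro L
  induction L with
  | nil => simp
  | cons a t ih =>
    intro h
    simp only [List.map_cons, List.sum_cons, List.length_cons, h a (by simp)]
    rw [ih (fun p hp => h p (by simp [hp]))]
    ring

end ListLemmas

section Struct

/-- Structural requirements: the list `L` of parts partitions `W` and `G` restricted to `W`
is complete multipartite with parts `L`. -/
def Str (G : SimpleGraph V) (W : Finset V) (L : List (Finset V)) : Prop :=
  (∀ v ∈ W, ∃ p ∈ L, v ∈ p) ∧ (∀ p ∈ L, p ⊆ W) ∧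
    L.Pairwise (fun p q => ∀ v, v ∈ p → v ∉ q) ∧
    (∀ u ∈ W, ∀ v ∈ W, (G.Adj u v ↔ ¬ ∃ p ∈ L, u ∈ p ∧ v ∈ p))

lemma Str.perm {G : SimpleGraph V} {W : Finset V} {L L' : List (Finset V)}
    (hp : L.Perm L') (h : Str G W L) : Str G W L' := by
  obtain ⟨h1, h2, h3, h4⟩ := h
  refine ⟨?_, ?_, ?_, ?_⟩
  · intro v hv; obtain ⟨p, hp1, hp2⟩ := h1 v hv; exact ⟨p, hp.mem_iff.1 hp1, hp2⟩
  · intro p hpL; exact h2 p (hp.mem_iff.2 hpL)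
  · exact (hp.pairwise_iff (fun {x y} h v hv hv2 => h v hv2 hv)).1 h3
  · intro u hu v hv
    rw [h4 u hu v hv]
    constructor <;> (rintro h ⟨p, hm, hx⟩; exact h ⟨p, by first | exact hp.mem_iff.2 hm | exact hp.mem_iff.1 hm, hx⟩)

lemma Str.step {G : SimpleGraph V} {W : Finset V} {p : Finset V} {L : List (Finset V)}
    (h : Str G W (p :: L)) {I : Finset V} (hI : I ⊆ p) : Str G (W \ I) ((p \ I) :: L) := by
  obtain ⟨h1, h2, h3, h4⟩ := h
  have hdisj : ∀ q ∈ L, ∀ v, v ∈ p → v ∉ q := by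
    have := List.pairwise_cons.1 h3
    exact fun q hq v hv => this.1 q hq v hv
  refine ⟨?_, ?_, ?_, ?_⟩
  · intro v hv
    obtain ⟨hvW, hvI⟩ := Finset.mem_sdiff.1 hv
    obtain ⟨q, hq1, hq2⟩ := h1 v hvW
    rcases List.mem_cons.1 hq1 with rfl | hq1
    · exact ⟨q \ I, by simp, Finset.mem_sdiff.2 ⟨hq2, hvI⟩⟩
    · exact ⟨q, by simp [hq1], hq2⟩
  · intro q hq
    rcases List.mem_cons.1 hq with rfl | hq
    · intro v hv
      obtain ⟨hv1, hv2⟩ := Finset.mem_sdiff.1 hv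
      exact Finset.mem_sdiff.2 ⟨h2 p (by simp) hv1, hv2⟩
    · intro v hv
      refine Finset.mem_sdiff.2 ⟨h2 q (by simp [hq]) hv, fun hvI => ?_⟩
      exact hdisj q hq v (hI hvI) hv
  · rw [List.pairwise_cons] at h3 ⊢
    refine ⟨fun q hq v hv => h3.1 q hq v (Finset.mem_sdiff.1 hv).1, h3.2⟩
  · intro u hu v hv
    have huW := (Finset.mem_sdiff.1 hu).1
    have hvW := (Finset.mem_sdiff.1 hv).1
    rw [h4 u huW v hvW]
    constructor
    · rintro h ⟨q, hq, hx⟩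
      rcases List.mem_cons.1 hq with hqp | hq
      · rw [hqp] at hx
        exact h ⟨p, by simp, (Finset.mem_sdiff.1 hx.1).1, (Finset.mem_sdiff.1 hx.2).1⟩
      · exact h ⟨q, by simp [hq], hx⟩
    · rintro h ⟨q, hq, hx⟩
      rcases List.mem_cons.1 hq with hqp | hq
      · rw [hqp] at hx
        exact h ⟨p \ I, by simp, Finset.mem_sdiff.2 ⟨hx.1, (Finset.mem_sdiff.1 hu).2⟩,
          Finset.mem_sdiff.2 ⟨hx.2, (Finset.mem_sdiff.1 hv).2⟩⟩
      · exact h ⟨q, by simp [hq], hx⟩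

lemma Str.drop_empty {G : SimpleGraph V} {W : Finset V} {L : List (Finset V)}
    (h : Str G W ((∅ : Finset V) :: L)) : Str G W L := by
  obtain ⟨h1, h2, h3, h4⟩ := h
  refine ⟨?_, fun p hp => h2 p (by simp [hp]), (List.pairwise_cons.1 h3).2, ?_⟩
  · intro v hv
    obtain ⟨q, hq, hx⟩ := h1 v hv
    rcases List.mem_cons.1 hq with rfl | hq
    · simp at hx
    · exact ⟨q, hq, hx⟩
  · intro u hu v hv
    rw [h4 u hu v hv]
    constructor <;> rintro h ⟨q, hq, hx⟩
    · exact h ⟨q, by simp [hq], hx⟩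
    · rcases List.mem_cons.1 hq with rfl | hq
      · simp at hx
      · exact h ⟨q, hq, hx⟩

lemma str_card {G : SimpleGraph V} : ∀ (L : List (Finset V)) (W : Finset V), Str G W L →
    W.card = (L.map Finset.card).sum := by
  intro L
  induction L with
  | nil =>
    intro W h
    have : W = ∅ := by
      by_contra hne
      obtain ⟨v, hv⟩ := Finset.nonempty_iff_ne_empty.2 hne
      obtain ⟨p, hp, -⟩ := h.1 v hv
      simp at hp
    simp [this]
  | cons p t ih =>
    intro W h
    have hstep := h.step (I := p) (le_refl p)
    have : Str G (W \ p) t := by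
      rw [Finset.sdiff_self] at hstep
      exact hstep.drop_empty
    have hc := ih (W \ p) this
    have hpW : p ⊆ W := h.2.1 p (by simp)
    have : (W \ p).card = W.card - p.card := Finset.card_sdiff_of_subset hpW
    have hle : p.card ≤ W.card := Finset.card_le_card hpW
    simp only [List.map_cons, List.sum_cons]
    omega

lemma indep_of_part {G : SimpleGraph V} {W : Finset V} {L : List (Finset V)}
    (h : Str G W L) {p : Finset V} (hp : p ∈ L) {I : Finset V} (hI : I ⊆ p) :
    ∀ u ∈ I, ∀ v ∈ I, ¬ G.Adj u v := by
  intro u hu v hv hadj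
  have hpW := h.2.1 p hp
  have := (h.2.2.2 u (hpW (hI hu)) v (hpW (hI hv))).1 hadj
  exact this ⟨p, hp, hI hu, hI hv⟩

end Struct

section ValidDef

/-- The full invariant for the Painter strategy. -/
structure Valid (G : SimpleGraph V) (W : Finset V) (f : V → ℕ)
    (LA LB LC LS : List (Finset V)) : Prop where
  str : Str G W (LA ++ LB ++ LC ++ LS)
  cardA : ∀ p ∈ LA, p.card = 1
  cardB : ∀ p ∈ LB, p.card = 2
  cardC : ∀ p ∈ LC, p.card = 3
  cardS : ∀ p ∈ LS, p.card = 1 ∨ p.card = 2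
  condA : ∀ l1 p l2, LA = l1 ++ p :: l2 → ∀ v ∈ p,
      LC.length + LB.length + (l1.length + 1) ≤ f v
  condS : ∀ l1 p l2, LS = l1 ++ p :: l2 → ∀ v ∈ p,
      2 * LC.length + LB.length + LA.length + (1 + (l1.map Finset.card).sum) ≤ f v
  condB1 : ∀ p ∈ LB, ∀ v ∈ p, LC.length + LB.length ≤ f v
  condB2 : ∀ p ∈ LB, W.card ≤ ∑ v ∈ p, f v
  condC1 : ∀ p ∈ LC, ∀ v ∈ p, LC.length + LB.length ≤ f v
  condC2 : ∀ p ∈ LC, ∀ u ∈ p, ∀ v ∈ p, u ≠ v → W.card - 1 ≤ f u + f v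
  condC3 : ∀ p ∈ LC, W.card - 1 + LC.length + LB.length + LA.length ≤ ∑ v ∈ p, f v

lemma Str.of_mseq {G : SimpleGraph V} {W : Finset V} {L L' : List (Finset V)}
    (h : (↑L : Multiset (Finset V)) = ↑L') (hs : Str G W L) : Str G W L' :=
  hs.perm (Multiset.coe_eq_coe.1 h)

end ValidDef

section Helpers

variable {f : V → ℕ} {U : Finset V}

/-- decremented list size function -/
def df (f : V → ℕ) (U : Finset V) : V → ℕ := fun v => f v - if v ∈ U then 1 else 0

lemma df_le (v : V) : df f U v ≤ f v := by unfold df; split <;> omega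

lemma le_df {v : V} {b : ℕ} (hU : v ∈ U → b + 1 ≤ f v) (hNU : v ∉ U → b ≤ f v) :
    b ≤ df f U v := by
  unfold df
  by_cases h : v ∈ U <;> simp [h]
  · exact le_tsub_of_add_le_right (hU h)
  · exact hNU h

lemma df_eq {v : V} (h : v ∉ U) : df f U v = f v := by simp [df, h]

lemma df_ge_sub {v : V} : f v - 1 ≤ df f U v := by unfold df; split <;> omega

lemma sum_le_sum_df (q : Finset V) :
    ∑ v ∈ q, f v ≤ (∑ v ∈ q, df f U v) + (q.filter (· ∈ U)).card := by
  have h1 : ∀ v ∈ q, f v ≤ df f U v + (if v ∈ U then 1 else 0) := by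
    intro v _; unfold df; split <;> omega
  calc ∑ v ∈ q, f v ≤ ∑ v ∈ q, (df f U v + if v ∈ U then 1 else 0) :=
        Finset.sum_le_sum h1
    _ = (∑ v ∈ q, df f U v) + ∑ v ∈ q, (if v ∈ U then 1 else 0) := Finset.sum_add_distrib
    _ = (∑ v ∈ q, df f U v) + (q.filter (· ∈ U)).card := by
        rw [Finset.sum_boole]; simp

lemma filter_card_le (q : Finset V) : (q.filter (· ∈ U)).card ≤ q.card :=
  Finset.card_le_card (Finset.filter_subset _ _)

lemma filter_card_lt (q : Finset V) (h : ¬ q ⊆ U) :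
    (q.filter (· ∈ U)).card + 1 ≤ q.card := by
  have hss : q.filter (· ∈ U) ⊂ q := by
    refine ⟨Finset.filter_subset _ _, fun hsub => h fun v hv => ?_⟩
    exact (Finset.mem_filter.1 (hsub hv)).2
  have := Finset.card_lt_card hss
  omega

lemma filter_card_le_one (q : Finset V)
    (h : ∀ u ∈ q, u ∈ U → ∀ w ∈ q, w ∈ U → u = w) : (q.filter (· ∈ U)).card ≤ 1 := by
  apply Finset.card_le_one.2
  intro a ha b hb
  obtain ⟨ha1, ha2⟩ := Finset.mem_filter.1 ha
  obtain ⟨hb1, hb2⟩ := Finset.mem_filter.1 hb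
  exact h a ha1 ha2 b hb1 hb2

lemma sum_pair {x y : V} (hxy : x ≠ y) (g : V → ℕ) : ∑ v ∈ ({x, y} : Finset V), g v = g x + g y := by
  rw [Finset.sum_insert (by simp [hxy]), Finset.sum_singleton]

/-- Splitting off two distinct elements of a finset. -/
lemma sum_split_pair {p : Finset V} {u w : V} (hu : u ∈ p) (hw : w ∈ p) (huw : u ≠ w)
    (g : V → ℕ) : ∑ v ∈ p, g v = g u + g w + ∑ v ∈ p \ {u, w}, g v := by
  have hsub : ({u, w} : Finset V) ⊆ p := by
    intro v hv; rcases Finset.mem_insert.1 hv with rfl | hv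
    · exact hu
    · rw [Finset.mem_singleton.1 hv]; exact hw
  rw [← Finset.sum_sdiff hsub, sum_pair huw]
  ring

lemma sum_split_one {p : Finset V} {x : V} (hx : x ∈ p) (g : V → ℕ) :
    ∑ v ∈ p, g v = g x + ∑ v ∈ p \ {x}, g v := by
  have hsub : ({x} : Finset V) ⊆ p := by simpa using hx
  rw [← Finset.sum_sdiff hsub, Finset.sum_singleton]
  ring

end Helpers

section Step

/-- What the Painter must produce in one round. -/
def StepGoal (G : SimpleGraph V) (W : Finset V) (f : V → ℕ) (U : Finset V) : Prop :=
  ∃ I : Finset V, I ⊆ U ∧ I.Nonempty ∧ (∀ u ∈ I, ∀ v ∈ I, ¬ G.Adj u v) ∧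
    ∃ LA' LB' LC' LS', Valid G (W \ I) (df f U) LA' LB' LC' LS'

variable {G : SimpleGraph V} {W U : Finset V} {f : V → ℕ} {LA LB LC LS : List (Finset V)}

lemma Valid.card_eq (hV : Valid G W f LA LB LC LS) :
    W.card = LA.length + 2 * LB.length + 3 * LC.length + (LS.map Finset.card).sum := by
  have h := str_card _ _ hV.str
  simp only [List.map_append, List.sum_append] at h
  rw [sum_map_card_const LA hV.cardA, sum_map_card_const LB hV.cardB,
    sum_map_card_const LC hV.cardC] at h
  omega

lemma Valid.subW (hV : Valid G W f LA LB LC LS) {p : Finset V}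
    (hp : p ∈ LA ∨ p ∈ LB ∨ p ∈ LC ∨ p ∈ LS) : p ⊆ W := by
  apply hV.str.2.1
  simp only [List.mem_append]
  tauto

lemma Valid.indep (hV : Valid G W f LA LB LC LS) {p : Finset V}
    (hp : p ∈ LA ∨ p ∈ LB ∨ p ∈ LC ∨ p ∈ LS) {I : Finset V} (hI : I ⊆ p) :
    ∀ u ∈ I, ∀ v ∈ I, ¬ G.Adj u v := by
  apply indep_of_part hV.str _ hI
  simp only [List.mem_append]
  tauto

lemma case1 (hV : Valid G W f LA LB LC LS)
    (h1 : ∃ p ∈ LC, p ⊆ U) : StepGoal G W f U := by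
  classical
  obtain ⟨p, hpC, hpU⟩ := h1
  obtain ⟨c1, c2, hLC⟩ := List.append_of_mem hpC
  subst hLC
  have hp3 : p.card = 3 := hV.cardC p hpC
  have hpW : p ⊆ W := hV.subW (Or.inr (Or.inr (Or.inl hpC)))
  have hn3 : 3 ≤ W.card := hp3 ▸ Finset.card_le_card hpW
  have hWI : (W \ p).card = W.card - 3 := by rw [Finset.card_sdiff_of_subset hpW, hp3]
  refine ⟨p, hpU, by rw [← Finset.card_pos, hp3]; omega,
    hV.indep (Or.inr (Or.inr (Or.inl hpC))) (le_refl _), LA, LB, c1 ++ c2, LS, ?_⟩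
  have hstr : Str G (W \ p) (LA ++ LB ++ (c1 ++ c2) ++ LS) := by
    have h0 : Str G W (p :: (LA ++ LB ++ (c1 ++ c2) ++ LS)) := by
      refine hV.str.of_mseq ?_
      simp only [← Multiset.coe_add, ← Multiset.cons_coe, ← Multiset.singleton_add]
      abel
    have h1 := h0.step (I := p) (le_refl _)
    rw [Finset.sdiff_self] at h1
    exact h1.drop_empty
  refine ⟨hstr, hV.cardA, hV.cardB, ?_, hV.cardS, ?_, ?_, ?_, ?_, ?_, ?_, ?_⟩
  · intro q hq
    refine hV.cardC q ?_
    simp only [List.mem_append, List.mem_cons] at hq ⊢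
    tauto
  · -- condA
    intro l1 r l2 heq v hv
    have old := hV.condA l1 r l2 heq v hv
    refine le_df (fun hvU => ?_) (fun hvU => ?_) <;>
      (simp only [List.length_append, List.length_cons] at old ⊢; omega)
  · -- condS
    intro l1 r l2 heq v hv
    have old := hV.condS l1 r l2 heq v hv
    refine le_df (fun hvU => ?_) (fun hvU => ?_) <;>
      (simp only [List.length_append, List.length_cons] at old ⊢; omega)
  · -- condB1
    intro q hq v hv
    have old := hV.condB1 q hq v hv
    refine le_df (fun hvU => ?_) (fun hvU => ?_) <;>
      (simp only [List.length_append, List.length_cons] at old ⊢; omega)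
  · -- condB2
    intro q hq
    have old := hV.condB2 q hq
    have hs := sum_le_sum_df (f := f) (U := U) q
    have hf : (q.filter (· ∈ U)).card ≤ q.card := filter_card_le q
    have hq2 : q.card = 2 := hV.cardB q hq
    omega
  · -- condC1
    intro q hq v hv
    have hqC : q ∈ c1 ++ p :: c2 := by
      simp only [List.mem_append, List.mem_cons] at hq ⊢; tauto
    have old := hV.condC1 q hqC v hv
    refine le_df (fun hvU => ?_) (fun hvU => ?_) <;>
      (simp only [List.length_append, List.length_cons] at old ⊢; omega)
  · -- condC2
    intro q hq u hu v hv huv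
    have hqC : q ∈ c1 ++ p :: c2 := by
      simp only [List.mem_append, List.mem_cons] at hq ⊢; tauto
    have old := hV.condC2 q hqC u hu v hv huv
    have h1 : f u - 1 ≤ df f U u := df_ge_sub
    have h2 : f v - 1 ≤ df f U v := df_ge_sub
    omega
  · -- condC3
    intro q hq
    have hqC : q ∈ c1 ++ p :: c2 := by
      simp only [List.mem_append, List.mem_cons] at hq ⊢; tauto
    have old := hV.condC3 q hqC
    have hs := sum_le_sum_df (f := f) (U := U) q
    have hf : (q.filter (· ∈ U)).card ≤ q.card := filter_card_le q
    have hq3 : q.card = 3 := hV.cardC q hqC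
    simp only [List.length_append, List.length_cons] at old ⊢
    omega

end Step

section Step2

variable {G : SimpleGraph V} {W U : Finset V} {f : V → ℕ} {LA LB LC LS : List (Finset V)}

lemma case2 (hV : Valid G W f LA LB LC LS)
    (hnot1 : ¬ ∃ p ∈ LC, p ⊆ U)
    (h2 : ∃ p ∈ LB, p ⊆ U) : StepGoal G W f U := by
  classical
  obtain ⟨p, hpB, hpU⟩ := h2
  obtain ⟨b1, b2, hLB⟩ := List.append_of_mem hpB
  subst hLB
  have hp2 : p.card = 2 := hV.cardB p hpB
  have hpW : p ⊆ W := hV.subW (Or.inr (Or.inl hpB))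
  have hn2 : 2 ≤ W.card := hp2 ▸ Finset.card_le_card hpW
  have hWI : (W \ p).card = W.card - 2 := by rw [Finset.card_sdiff_of_subset hpW, hp2]
  refine ⟨p, hpU, by rw [← Finset.card_pos, hp2]; omega,
    hV.indep (Or.inr (Or.inl hpB)) (le_refl _), LA, b1 ++ b2, LC, LS, ?_⟩
  have hstr : Str G (W \ p) (LA ++ (b1 ++ b2) ++ LC ++ LS) := by
    have h0 : Str G W (p :: (LA ++ (b1 ++ b2) ++ LC ++ LS)) := by
      refine hV.str.of_mseq ?_
      simp only [← Multiset.coe_add, ← Multiset.cons_coe, ← Multiset.singleton_add]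
      abel
    have h1 := h0.step (I := p) (le_refl _)
    rw [Finset.sdiff_self] at h1
    exact h1.drop_empty
  have hmemB : ∀ q ∈ b1 ++ b2, q ∈ b1 ++ p :: b2 := by
    intro q hq; simp only [List.mem_append, List.mem_cons] at hq ⊢; tauto
  refine ⟨hstr, hV.cardA, fun q hq => hV.cardB q (hmemB q hq), hV.cardC, hV.cardS,
    ?_, ?_, ?_, ?_, ?_, ?_, ?_⟩
  · intro l1 r l2 heq v hv
    have old := hV.condA l1 r l2 heq v hv
    refine le_df (fun hvU => ?_) (fun hvU => ?_) <;>
      (simp only [List.length_append, List.length_cons] at old ⊢; omega)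
  · intro l1 r l2 heq v hv
    have old := hV.condS l1 r l2 heq v hv
    refine le_df (fun hvU => ?_) (fun hvU => ?_) <;>
      (simp only [List.length_append, List.length_cons] at old ⊢; omega)
  · intro q hq v hv
    have old := hV.condB1 q (hmemB q hq) v hv
    refine le_df (fun hvU => ?_) (fun hvU => ?_) <;>
      (simp only [List.length_append, List.length_cons] at old ⊢; omega)
  · intro q hq
    have old := hV.condB2 q (hmemB q hq)
    have hs := sum_le_sum_df (f := f) (U := U) q
    have hf : (q.filter (· ∈ U)).card ≤ q.card := filter_card_le q
    have hq2 : q.card = 2 := hV.cardB q (hmemB q hq)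
    omega
  · intro q hq v hv
    have old := hV.condC1 q hq v hv
    refine le_df (fun hvU => ?_) (fun hvU => ?_) <;>
      (simp only [List.length_append, List.length_cons] at old ⊢; omega)
  · intro q hq u hu v hv huv
    have old := hV.condC2 q hq u hu v hv huv
    have h1 : f u - 1 ≤ df f U u := df_ge_sub
    have h2 : f v - 1 ≤ df f U v := df_ge_sub
    omega
  · intro q hq
    have old := hV.condC3 q hq
    have hs := sum_le_sum_df (f := f) (U := U) q
    have hnf : ¬ q ⊆ U := fun h => hnot1 ⟨q, hq, h⟩
    have hq3 : q.card = 3 := hV.cardC q hq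
    have hf : (q.filter (· ∈ U)).card + 1 ≤ q.card := filter_card_lt q hnf
    simp only [List.length_append, List.length_cons] at old ⊢
    omega

lemma third_vertex {U p : Finset V} (hp3 : p.card = 3) {u w : V} (hu : u ∈ p) (hw : w ∈ p)
    (huw : u ≠ w) (huU : u ∈ U) (hwU : w ∈ U) (hnf : ¬ p ⊆ U) :
    ∃ z, p \ {u, w} = {z} ∧ z ∈ p ∧ z ∉ U ∧ z ≠ u ∧ z ≠ w := by
  have hsub : ({u, w} : Finset V) ⊆ p := by
    intro v hv; rcases Finset.mem_insert.1 hv with rfl | hv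
    · exact hu
    · rw [Finset.mem_singleton.1 hv]; exact hw
  have hcard2 : ({u, w} : Finset V).card = 2 := by
    rw [Finset.card_insert_of_notMem (by simp [huw]), Finset.card_singleton]
  have hcard : (p \ {u, w}).card = 1 := by
    rw [Finset.card_sdiff_of_subset hsub, hp3, hcard2]
  obtain ⟨z, hz⟩ := Finset.card_eq_one.1 hcard
  have hzmem : z ∈ p \ {u, w} := hz ▸ Finset.mem_singleton_self z
  have hzp : z ∈ p := (Finset.mem_sdiff.1 hzmem).1
  have hznot : z ∉ ({u, w} : Finset V) := (Finset.mem_sdiff.1 hzmem).2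
  have hzu : z ≠ u := fun h => hznot (by simp [h])
  have hzw : z ≠ w := fun h => hznot (by simp [h])
  refine ⟨z, hz, hzp, fun hzU => hnf ?_, hzu, hzw⟩
  have hsub3 : ({u, w, z} : Finset V) ⊆ p := by
    intro v hv
    rcases Finset.mem_insert.1 hv with rfl | hv
    · exact hu
    rcases Finset.mem_insert.1 hv with rfl | hv
    · exact hw
    · rw [Finset.mem_singleton.1 hv]; exact hzp
  have hcard3 : ({u, w, z} : Finset V).card = 3 := by
    rw [Finset.card_insert_of_notMem (by simp [huw, hzu.symm]),
      Finset.card_insert_of_notMem (by simp [hzw.symm]), Finset.card_singleton]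
  have hpeq : ({u, w, z} : Finset V) = p :=
    Finset.eq_of_subset_of_card_le hsub3 (by omega)
  rw [← hpeq]
  intro v hv
  rcases Finset.mem_insert.1 hv with rfl | hv
  · exact huU
  rcases Finset.mem_insert.1 hv with rfl | hv
  · exact hwU
  · rw [Finset.mem_singleton.1 hv]; exact hzU

end Step2

section Step3

variable {G : SimpleGraph V} {W U : Finset V} {f : V → ℕ} {LA LB LC LS : List (Finset V)}

lemma case3 (hV : Valid G W f LA LB LC LS)
    (hnot1 : ¬ ∃ p ∈ LC, p ⊆ U)
    (hnot2 : ¬ ∃ p ∈ LB, p ⊆ U)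
    (hAU : ∀ p ∈ LA, ∀ v ∈ p, v ∉ U)
    (h3 : ∃ p ∈ LC, ∃ u ∈ p, ∃ w ∈ p, u ≠ w ∧ u ∈ U ∧ w ∈ U) : StepGoal G W f U := by
  classical
  obtain ⟨p, hpC, u, hu, w, hw, huw, huU, hwU⟩ := h3
  obtain ⟨c1, c2, hLC⟩ := List.append_of_mem hpC
  subst hLC
  have hp3 : p.card = 3 := hV.cardC p hpC
  have hpW : p ⊆ W := hV.subW (Or.inr (Or.inr (Or.inl hpC)))
  have hn3 : 3 ≤ W.card := hp3 ▸ Finset.card_le_card hpW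
  have hnf : ¬ p ⊆ U := fun h => hnot1 ⟨p, hpC, h⟩
  obtain ⟨z, hqz, hzp, hzU, hzu, hzw⟩ := third_vertex hp3 hu hw huw huU hwU hnf
  have hIU : ({u, w} : Finset V) ⊆ U := by
    intro v hv; rcases Finset.mem_insert.1 hv with rfl | hv
    · exact huU
    · rw [Finset.mem_singleton.1 hv]; exact hwU
  have hIp : ({u, w} : Finset V) ⊆ p := by
    intro v hv; rcases Finset.mem_insert.1 hv with rfl | hv
    · exact hu
    · rw [Finset.mem_singleton.1 hv]; exact hw
  have hI2 : ({u, w} : Finset V).card = 2 := by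
    rw [Finset.card_insert_of_notMem (by simp [huw]), Finset.card_singleton]
  have hWI : (W \ ({u, w} : Finset V)).card = W.card - 2 := by
    rw [Finset.card_sdiff_of_subset (hIp.trans hpW), hI2]
  have hq1 : (p \ ({u, w} : Finset V)).card = 1 := by rw [hqz, Finset.card_singleton]
  have hqmem : ∀ v ∈ p \ ({u, w} : Finset V), v = z := by
    intro v hv; rw [hqz] at hv; exact Finset.mem_singleton.1 hv
  refine ⟨{u, w}, hIU, ⟨u, by simp⟩, hV.indep (Or.inr (Or.inr (Or.inl hpC))) hIp,
    (p \ ({u, w} : Finset V)) :: LA, LB, c1 ++ c2, LS, ?_⟩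
  have hstr : Str G (W \ ({u, w} : Finset V)) ((p \ ({u, w} : Finset V)) :: LA ++ LB ++ (c1 ++ c2) ++ LS) := by
    have h0 : Str G W (p :: (LA ++ LB ++ (c1 ++ c2) ++ LS)) := by
      refine hV.str.of_mseq ?_
      simp only [← Multiset.coe_add, ← Multiset.cons_coe, ← Multiset.singleton_add]
      abel
    refine (h0.step hIp).of_mseq ?_
    simp only [← Multiset.coe_add, ← Multiset.cons_coe, ← Multiset.singleton_add]
    abel
  have hmemC : ∀ r ∈ c1 ++ c2, r ∈ c1 ++ p :: c2 := by
    intro r hr; simp only [List.mem_append, List.mem_cons] at hr ⊢; tauto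
  refine ⟨hstr, ?_, hV.cardB, fun r hr => hV.cardC r (hmemC r hr), hV.cardS,
    ?_, ?_, ?_, ?_, ?_, ?_, ?_⟩
  · intro r hr
    rcases List.mem_cons.1 hr with rfl | hr
    · exact hq1
    · exact hV.cardA r hr
  · -- condA, new list q :: LA
    intro l1 r l2 heq v hv
    rcases split_cons heq with ⟨hl1, hrq, hl2⟩ | ⟨t, hl1, hLA⟩
    · subst hrq
      have hvp : v ∈ p := (Finset.mem_sdiff.1 hv).1
      have hvU : v ∉ U := by rw [hqmem v hv]; exact hzU
      have hzP := hV.condC1 p hpC v hvp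
      rw [df_eq hvU]
      simp only [List.length_append, List.length_cons, List.length_nil, hl1] at hzP ⊢
      omega
    · have hrLA : r ∈ LA := by rw [hLA]; simp
      have old := hV.condA t r l2 hLA v hv
      rw [df_eq (hAU r hrLA v hv)]
      simp only [List.length_append, List.length_cons, hl1] at old ⊢
      omega
  · intro l1 r l2 heq v hv
    have old := hV.condS l1 r l2 heq v hv
    refine le_df (fun hvU => ?_) (fun hvU => ?_) <;>
      (simp only [List.length_append, List.length_cons, List.length_nil] at old ⊢; omega)
  · intro r hr v hv
    have old := hV.condB1 r hr v hv
    refine le_df (fun hvU => ?_) (fun hvU => ?_) <;>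
      (simp only [List.length_append, List.length_cons, List.length_nil] at old ⊢; omega)
  · intro r hr
    have old := hV.condB2 r hr
    have hs := sum_le_sum_df (f := f) (U := U) r
    have hnfr : ¬ r ⊆ U := fun h => hnot2 ⟨r, hr, h⟩
    have hf : (r.filter (· ∈ U)).card + 1 ≤ r.card := filter_card_lt r hnfr
    have hr2 : r.card = 2 := hV.cardB r hr
    omega
  · intro r hr v hv
    have old := hV.condC1 r (hmemC r hr) v hv
    refine le_df (fun hvU => ?_) (fun hvU => ?_) <;>
      (simp only [List.length_append, List.length_cons, List.length_nil] at old ⊢; omega)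
  · intro r hr a ha b hb hab
    have old := hV.condC2 r (hmemC r hr) a ha b hb hab
    have h1 : f a - 1 ≤ df f U a := df_ge_sub
    have h2 : f b - 1 ≤ df f U b := df_ge_sub
    omega
  · intro r hr
    have old := hV.condC3 r (hmemC r hr)
    have hs := sum_le_sum_df (f := f) (U := U) r
    have hnfr : ¬ r ⊆ U := fun h => hnot1 ⟨r, hmemC r hr, h⟩
    have hf : (r.filter (· ∈ U)).card + 1 ≤ r.card := filter_card_lt r hnfr
    have hr3 : r.card = 3 := hV.cardC r (hmemC r hr)
    simp only [List.length_append, List.length_cons, List.length_nil] at old ⊢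
    omega

lemma case4 (hV : Valid G W f LA LB LC LS)
    (hnot1 : ¬ ∃ p ∈ LC, p ⊆ U)
    (hnot2 : ¬ ∃ p ∈ LB, p ⊆ U)
    (h4 : ∃ p ∈ LC, ∃ u ∈ p, ∃ w ∈ p, u ≠ w ∧ u ∈ U ∧ w ∈ U ∧
      (f u + f w < W.card ∨ f u ≤ LC.length + LB.length ∨ f w ≤ LC.length + LB.length)) :
    StepGoal G W f U := by
  classical
  obtain ⟨p, hpC, u, hu, w, hw, huw, huU, hwU, harith⟩ := h4
  obtain ⟨c1, c2, hLC⟩ := List.append_of_mem hpC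
  have hn := hV.card_eq
  subst hLC
  have hp3 : p.card = 3 := hV.cardC p hpC
  have hpW : p ⊆ W := hV.subW (Or.inr (Or.inr (Or.inl hpC)))
  have hn3 : 3 ≤ W.card := hp3 ▸ Finset.card_le_card hpW
  have hnf : ¬ p ⊆ U := fun h => hnot1 ⟨p, hpC, h⟩
  obtain ⟨z, hqz, hzp, hzU, hzu, hzw⟩ := third_vertex hp3 hu hw huw huU hwU hnf
  have hIU : ({u, w} : Finset V) ⊆ U := by
    intro v hv; rcases Finset.mem_insert.1 hv with rfl | hv
    · exact huU
    · rw [Finset.mem_singleton.1 hv]; exact hwU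
  have hIp : ({u, w} : Finset V) ⊆ p := by
    intro v hv; rcases Finset.mem_insert.1 hv with rfl | hv
    · exact hu
    · rw [Finset.mem_singleton.1 hv]; exact hw
  have hI2 : ({u, w} : Finset V).card = 2 := by
    rw [Finset.card_insert_of_notMem (by simp [huw]), Finset.card_singleton]
  have hWI : (W \ ({u, w} : Finset V)).card = W.card - 2 := by
    rw [Finset.card_sdiff_of_subset (hIp.trans hpW), hI2]
  have hq1 : (p \ ({u, w} : Finset V)).card = 1 := by rw [hqz, Finset.card_singleton]
  have hqmem : ∀ v ∈ p \ ({u, w} : Finset V), v = z := by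
    intro v hv; rw [hqz] at hv; exact Finset.mem_singleton.1 hv
  -- the key arithmetic: f z is large
  have hzbig : (c1 ++ p :: c2).length + LB.length + LA.length ≤ f z := by
    have hc3 := hV.condC3 p hpC
    have hsum : ∑ v ∈ p, f v = f u + f w + f z := by
      rw [sum_split_pair hu hw huw f, hqz, Finset.sum_singleton]
    have hc2u := hV.condC2 p hpC z hzp u hu hzu
    have hc2w := hV.condC2 p hpC z hzp w hw hzw
    simp only [List.length_append, List.length_cons, List.length_nil] at hc3 harith hn ⊢
    omega
  refine ⟨{u, w}, hIU, ⟨u, by simp⟩, hV.indep (Or.inr (Or.inr (Or.inl hpC))) hIp,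
    LA ++ [p \ ({u, w} : Finset V)], LB, c1 ++ c2, LS, ?_⟩
  have hstr : Str G (W \ ({u, w} : Finset V)) ((LA ++ [p \ ({u, w} : Finset V)]) ++ LB ++ (c1 ++ c2) ++ LS) := by
    have h0 : Str G W (p :: (LA ++ LB ++ (c1 ++ c2) ++ LS)) := by
      refine hV.str.of_mseq ?_
      simp only [← Multiset.coe_add, ← Multiset.cons_coe, ← Multiset.singleton_add]
      abel
    refine (h0.step hIp).of_mseq ?_
    simp only [← Multiset.coe_add, ← Multiset.cons_coe, ← Multiset.singleton_add]
    abel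
  have hmemC : ∀ r ∈ c1 ++ c2, r ∈ c1 ++ p :: c2 := by
    intro r hr; simp only [List.mem_append, List.mem_cons] at hr ⊢; tauto
  refine ⟨hstr, ?_, hV.cardB, fun r hr => hV.cardC r (hmemC r hr), hV.cardS,
    ?_, ?_, ?_, ?_, ?_, ?_, ?_⟩
  · intro r hr
    rcases List.mem_append.1 hr with hr | hr
    · exact hV.cardA r hr
    · rw [List.mem_singleton.1 hr]; exact hq1
  · -- condA, new list LA ++ [q]
    intro l1 r l2 heq v hv
    rcases split_snoc heq with ⟨l2', hl2, hLA⟩ | ⟨hl1, hrq, hl2⟩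
    · have old := hV.condA l1 r l2' hLA v hv
      refine le_df (fun hvU => ?_) (fun hvU => ?_) <;>
        (simp only [List.length_append, List.length_cons, List.length_nil] at old ⊢; omega)
    · subst hrq
      have hvU : v ∉ U := by rw [hqmem v hv]; exact hzU
      rw [df_eq hvU, hqmem v hv]
      simp only [List.length_append, List.length_cons, List.length_nil, hl1] at hzbig ⊢
      omega
  · intro l1 r l2 heq v hv
    have old := hV.condS l1 r l2 heq v hv
    refine le_df (fun hvU => ?_) (fun hvU => ?_) <;>
      (simp only [List.length_append, List.length_cons, List.length_nil] at old ⊢; omega)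
  · intro r hr v hv
    have old := hV.condB1 r hr v hv
    refine le_df (fun hvU => ?_) (fun hvU => ?_) <;>
      (simp only [List.length_append, List.length_cons, List.length_nil] at old ⊢; omega)
  · intro r hr
    have old := hV.condB2 r hr
    have hs := sum_le_sum_df (f := f) (U := U) r
    have hnfr : ¬ r ⊆ U := fun h => hnot2 ⟨r, hr, h⟩
    have hf : (r.filter (· ∈ U)).card + 1 ≤ r.card := filter_card_lt r hnfr
    have hr2 : r.card = 2 := hV.cardB r hr
    omega
  · intro r hr v hv
    have old := hV.condC1 r (hmemC r hr) v hv
    refine le_df (fun hvU => ?_) (fun hvU => ?_) <;>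
      (simp only [List.length_append, List.length_cons, List.length_nil] at old ⊢; omega)
  · intro r hr a ha b hb hab
    have old := hV.condC2 r (hmemC r hr) a ha b hb hab
    have h1 : f a - 1 ≤ df f U a := df_ge_sub
    have h2 : f b - 1 ≤ df f U b := df_ge_sub
    omega
  · intro r hr
    have old := hV.condC3 r (hmemC r hr)
    have hs := sum_le_sum_df (f := f) (U := U) r
    have hnfr : ¬ r ⊆ U := fun h => hnot1 ⟨r, hmemC r hr, h⟩
    have hf : (r.filter (· ∈ U)).card + 1 ≤ r.card := filter_card_lt r hnfr
    have hr3 : r.card = 3 := hV.cardC r (hmemC r hr)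
    simp only [List.length_append, List.length_cons, List.length_nil] at old ⊢
    omega

end Step3

section Step4

variable {G : SimpleGraph V} {W U : Finset V} {f : V → ℕ} {LA LB LC LS : List (Finset V)}

lemma second_vertex {U p : Finset V} (hp2 : p.card = 2) {x : V} (hx : x ∈ p) (hxU : x ∈ U)
    (hnf : ¬ p ⊆ U) : ∃ y, p \ {x} = {y} ∧ y ∈ p ∧ y ∉ U ∧ y ≠ x := by
  have hsub : ({x} : Finset V) ⊆ p := by simpa using hx
  have hcard : (p \ {x}).card = 1 := by
    rw [Finset.card_sdiff_of_subset hsub, hp2, Finset.card_singleton]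
  obtain ⟨y, hy⟩ := Finset.card_eq_one.1 hcard
  have hymem : y ∈ p \ {x} := hy ▸ Finset.mem_singleton_self y
  have hyp : y ∈ p := (Finset.mem_sdiff.1 hymem).1
  have hyx : y ≠ x := by
    have := (Finset.mem_sdiff.1 hymem).2; simpa using this
  refine ⟨y, hy, hyp, fun hyU => hnf ?_, hyx⟩
  have hsub2 : ({x, y} : Finset V) ⊆ p := by
    intro v hv; rcases Finset.mem_insert.1 hv with rfl | hv
    · exact hx
    · rw [Finset.mem_singleton.1 hv]; exact hyp
  have hcard2 : ({x, y} : Finset V).card = 2 := by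
    rw [Finset.card_insert_of_notMem (by simp [Ne.symm hyx]), Finset.card_singleton]
  have hpeq : ({x, y} : Finset V) = p := Finset.eq_of_subset_of_card_le hsub2 (by omega)
  rw [← hpeq]
  intro v hv
  rcases Finset.mem_insert.1 hv with rfl | hv
  · exact hxU
  · rw [Finset.mem_singleton.1 hv]; exact hyU

/-- Slackness of doubly-hit triple parts: both endpoints have slack and the pair sum is
at least `|W|`. -/
def C2Slack (W U : Finset V) (f : V → ℕ) (LB LC : List (Finset V)) : Prop :=
  ∀ p ∈ LC, ∀ u ∈ p, ∀ w ∈ p, u ≠ w → u ∈ U → w ∈ U →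
    W.card ≤ f u + f w ∧ LC.length + LB.length + 1 ≤ f u

lemma case5 (hV : Valid G W f LA LB LC LS)
    (hnot1 : ¬ ∃ p ∈ LC, p ⊆ U)
    (hnot2 : ¬ ∃ p ∈ LB, p ⊆ U)
    (hsl : C2Slack W U f LB LC)
    (h5 : ∃ p ∈ LB, ∃ x ∈ p, x ∈ U ∧ f x ≤ LC.length + LB.length) : StepGoal G W f U := by
  classical
  obtain ⟨p, hpB, x, hx, hxU, hxf⟩ := h5
  obtain ⟨b1, b2, hLB⟩ := List.append_of_mem hpB
  have hn := hV.card_eq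
  subst hLB
  have hp2 : p.card = 2 := hV.cardB p hpB
  have hpW : p ⊆ W := hV.subW (Or.inr (Or.inl hpB))
  have hn2 : 2 ≤ W.card := hp2 ▸ Finset.card_le_card hpW
  have hnf : ¬ p ⊆ U := fun h => hnot2 ⟨p, hpB, h⟩
  obtain ⟨y, hqy, hyp, hyU, hyx⟩ := second_vertex hp2 hx hxU hnf
  have hIp : ({x} : Finset V) ⊆ p := by simpa using hx
  have hWI : (W \ ({x} : Finset V)).card = W.card - 1 := by
    rw [Finset.card_sdiff_of_subset (hIp.trans hpW), Finset.card_singleton]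
  have hq1 : (p \ ({x} : Finset V)).card = 1 := by rw [hqy, Finset.card_singleton]
  have hqmem : ∀ v ∈ p \ ({x} : Finset V), v = y := by
    intro v hv; rw [hqy] at hv; exact Finset.mem_singleton.1 hv
  have hsumB : W.card ≤ f x + f y := by
    have h := hV.condB2 p hpB
    rw [sum_split_one hx f, hqy, Finset.sum_singleton] at h
    exact h
  refine ⟨{x}, by simpa using hxU, ⟨x, by simp⟩, hV.indep (Or.inr (Or.inl hpB)) hIp,
    LA, b1 ++ b2, LC, LS ++ [p \ ({x} : Finset V)], ?_⟩
  have hstr : Str G (W \ ({x} : Finset V))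
      (LA ++ (b1 ++ b2) ++ LC ++ (LS ++ [p \ ({x} : Finset V)])) := by
    have h0 : Str G W (p :: (LA ++ (b1 ++ b2) ++ LC ++ LS)) := by
      refine hV.str.of_mseq ?_
      simp only [← Multiset.coe_add, ← Multiset.cons_coe, ← Multiset.singleton_add]
      abel
    refine (h0.step hIp).of_mseq ?_
    simp only [← Multiset.coe_add, ← Multiset.cons_coe, ← Multiset.singleton_add]
    abel
  have hmemB : ∀ q ∈ b1 ++ b2, q ∈ b1 ++ p :: b2 := by
    intro q hq; simp only [List.mem_append, List.mem_cons] at hq ⊢; tauto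
  refine ⟨hstr, hV.cardA, fun q hq => hV.cardB q (hmemB q hq), hV.cardC, ?_,
    ?_, ?_, ?_, ?_, ?_, ?_, ?_⟩
  · intro q hq
    rcases List.mem_append.1 hq with hq | hq
    · exact hV.cardS q hq
    · rw [List.mem_singleton.1 hq]; left; exact hq1
  · -- condA
    intro l1 r l2 heq v hv
    have old := hV.condA l1 r l2 heq v hv
    refine le_df (fun hvU => ?_) (fun hvU => ?_) <;>
      (simp only [List.length_append, List.length_cons, List.length_nil] at old ⊢; omega)
  · -- condS, new list LS ++ [q]
    intro l1 r l2 heq v hv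
    rcases split_snoc heq with ⟨l2', hl2, hLS⟩ | ⟨hl1, hrq, hl2⟩
    · have old := hV.condS l1 r l2' hLS v hv
      refine le_df (fun hvU => ?_) (fun hvU => ?_) <;>
        (simp only [List.length_append, List.length_cons, List.length_nil] at old ⊢; omega)
    · subst hrq
      have hvU : v ∉ U := by rw [hqmem v hv]; exact hyU
      rw [df_eq hvU, hqmem v hv]
      simp only [List.length_append, List.length_cons, List.length_nil, hl1] at hn hxf ⊢
      omega
  · intro q hq v hv
    have old := hV.condB1 q (hmemB q hq) v hv
    refine le_df (fun hvU => ?_) (fun hvU => ?_) <;>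
      (simp only [List.length_append, List.length_cons, List.length_nil] at old ⊢; omega)
  · intro q hq
    have old := hV.condB2 q (hmemB q hq)
    have hs := sum_le_sum_df (f := f) (U := U) q
    have hnfr : ¬ q ⊆ U := fun h => hnot2 ⟨q, hmemB q hq, h⟩
    have hf : (q.filter (· ∈ U)).card + 1 ≤ q.card := filter_card_lt q hnfr
    have hq2 : q.card = 2 := hV.cardB q (hmemB q hq)
    omega
  · intro q hq v hv
    have old := hV.condC1 q hq v hv
    refine le_df (fun hvU => ?_) (fun hvU => ?_) <;>
      (simp only [List.length_append, List.length_cons, List.length_nil] at old ⊢; omega)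
  · intro q hq a ha b hb hab
    have old := hV.condC2 q hq a ha b hb hab
    by_cases haU : a ∈ U <;> by_cases hbU : b ∈ U
    · have hslk := (hsl q hq a ha b hb hab haU hbU).1
      have h1 : f a - 1 ≤ df f U a := df_ge_sub
      have h2 : f b - 1 ≤ df f U b := df_ge_sub
      omega
    · rw [df_eq hbU]
      have h1 : f a - 1 ≤ df f U a := df_ge_sub
      omega
    · rw [df_eq haU]
      have h2 : f b - 1 ≤ df f U b := df_ge_sub
      omega
    · rw [df_eq haU, df_eq hbU]
      omega
  · intro q hq
    have old := hV.condC3 q hq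
    have hs := sum_le_sum_df (f := f) (U := U) q
    have hnfr : ¬ q ⊆ U := fun h => hnot1 ⟨q, hq, h⟩
    have hf : (q.filter (· ∈ U)).card + 1 ≤ q.card := filter_card_lt q hnfr
    have hq3 : q.card = 3 := hV.cardC q hq
    simp only [List.length_append, List.length_cons, List.length_nil] at old ⊢
    omega

end Step4

section Step5

variable {G : SimpleGraph V} {W U : Finset V} {f : V → ℕ} {LA LB LC LS : List (Finset V)}

lemma case6 (hV : Valid G W f LA LB LC LS)
    (hnot1 : ¬ ∃ p ∈ LC, p ⊆ U)
    (hnot2 : ¬ ∃ p ∈ LB, p ⊆ U)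
    (hsl : C2Slack W U f LB LC)
    (h6 : ∃ p ∈ LC, ∃ x ∈ p, x ∈ U ∧ f x ≤ LC.length + LB.length) : StepGoal G W f U := by
  classical
  obtain ⟨p, hpC, x, hx, hxU, hxf⟩ := h6
  obtain ⟨c1, c2, hLC⟩ := List.append_of_mem hpC
  have hn := hV.card_eq
  subst hLC
  have hp3 : p.card = 3 := hV.cardC p hpC
  have hpW : p ⊆ W := hV.subW (Or.inr (Or.inr (Or.inl hpC)))
  have hn3 : 3 ≤ W.card := hp3 ▸ Finset.card_le_card hpW
  have hIp : ({x} : Finset V) ⊆ p := by simpa using hx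
  have hWI : (W \ ({x} : Finset V)).card = W.card - 1 := by
    rw [Finset.card_sdiff_of_subset (hIp.trans hpW), Finset.card_singleton]
  have hq2 : (p \ ({x} : Finset V)).card = 2 := by
    rw [Finset.card_sdiff_of_subset hIp, hp3, Finset.card_singleton]
  have hqp : ∀ v ∈ p \ ({x} : Finset V), v ∈ p ∧ v ≠ x := by
    intro v hv
    have h := Finset.mem_sdiff.1 hv
    exact ⟨h.1, by simpa using h.2⟩
  have hqU : ∀ v ∈ p \ ({x} : Finset V), v ∉ U := by
    intro v hv hvU
    obtain ⟨hvp, hvx⟩ := hqp v hv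
    have := (hsl p hpC x hx v hvp (Ne.symm hvx) hxU hvU).2
    omega
  refine ⟨{x}, by simpa using hxU, ⟨x, by simp⟩,
    hV.indep (Or.inr (Or.inr (Or.inl hpC))) hIp,
    LA, LB, c1 ++ c2, LS ++ [p \ ({x} : Finset V)], ?_⟩
  have hstr : Str G (W \ ({x} : Finset V))
      (LA ++ LB ++ (c1 ++ c2) ++ (LS ++ [p \ ({x} : Finset V)])) := by
    have h0 : Str G W (p :: (LA ++ LB ++ (c1 ++ c2) ++ LS)) := by
      refine hV.str.of_mseq ?_
      simp only [← Multiset.coe_add, ← Multiset.cons_coe, ← Multiset.singleton_add]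
      abel
    refine (h0.step hIp).of_mseq ?_
    simp only [← Multiset.coe_add, ← Multiset.cons_coe, ← Multiset.singleton_add]
    abel
  have hmemC : ∀ r ∈ c1 ++ c2, r ∈ c1 ++ p :: c2 := by
    intro r hr; simp only [List.mem_append, List.mem_cons] at hr ⊢; tauto
  refine ⟨hstr, hV.cardA, hV.cardB, fun r hr => hV.cardC r (hmemC r hr), ?_,
    ?_, ?_, ?_, ?_, ?_, ?_, ?_⟩
  · intro q hq
    rcases List.mem_append.1 hq with hq | hq
    · exact hV.cardS q hq
    · rw [List.mem_singleton.1 hq]; right; exact hq2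
  · intro l1 r l2 heq v hv
    have old := hV.condA l1 r l2 heq v hv
    refine le_df (fun hvU => ?_) (fun hvU => ?_) <;>
      (simp only [List.length_append, List.length_cons, List.length_nil] at old ⊢; omega)
  · -- condS, new list LS ++ [q]
    intro l1 r l2 heq v hv
    rcases split_snoc heq with ⟨l2', hl2, hLS⟩ | ⟨hl1, hrq, hl2⟩
    · have old := hV.condS l1 r l2' hLS v hv
      refine le_df (fun hvU => ?_) (fun hvU => ?_) <;>
        (simp only [List.length_append, List.length_cons, List.length_nil] at old ⊢; omega)
    · subst hrq
      have hvU : v ∉ U := hqU v hv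
      obtain ⟨hvp, hvx⟩ := hqp v hv
      have hc2 := hV.condC2 p hpC v hvp x hx hvx
      rw [df_eq hvU]
      simp only [List.length_append, List.length_cons, List.length_nil, hl1] at hn hxf hc2 ⊢
      omega
  · intro q hq v hv
    have old := hV.condB1 q hq v hv
    refine le_df (fun hvU => ?_) (fun hvU => ?_) <;>
      (simp only [List.length_append, List.length_cons, List.length_nil] at old ⊢; omega)
  · intro q hq
    have old := hV.condB2 q hq
    have hs := sum_le_sum_df (f := f) (U := U) q
    have hnfr : ¬ q ⊆ U := fun h => hnot2 ⟨q, hq, h⟩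
    have hf : (q.filter (· ∈ U)).card + 1 ≤ q.card := filter_card_lt q hnfr
    have hq2' : q.card = 2 := hV.cardB q hq
    omega
  · intro q hq v hv
    have old := hV.condC1 q (hmemC q hq) v hv
    refine le_df (fun hvU => ?_) (fun hvU => ?_) <;>
      (simp only [List.length_append, List.length_cons, List.length_nil] at old ⊢; omega)
  · intro q hq a ha b hb hab
    have old := hV.condC2 q (hmemC q hq) a ha b hb hab
    by_cases haU : a ∈ U <;> by_cases hbU : b ∈ U
    · have hslk := (hsl q (hmemC q hq) a ha b hb hab haU hbU).1
      have h1 : f a - 1 ≤ df f U a := df_ge_sub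
      have h2 : f b - 1 ≤ df f U b := df_ge_sub
      omega
    · rw [df_eq hbU]
      have h1 : f a - 1 ≤ df f U a := df_ge_sub
      omega
    · rw [df_eq haU]
      have h2 : f b - 1 ≤ df f U b := df_ge_sub
      omega
    · rw [df_eq haU, df_eq hbU]
      omega
  · intro q hq
    have old := hV.condC3 q (hmemC q hq)
    have hs := sum_le_sum_df (f := f) (U := U) q
    have hnfr : ¬ q ⊆ U := fun h => hnot1 ⟨q, hmemC q hq, h⟩
    have hf : (q.filter (· ∈ U)).card + 1 ≤ q.card := filter_card_lt q hnfr
    have hq3 : q.card = 3 := hV.cardC q (hmemC q hq)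
    simp only [List.length_append, List.length_cons, List.length_nil] at old ⊢
    omega

end Step5

section Step6

variable {G : SimpleGraph V} {W U : Finset V} {f : V → ℕ} {LA LB LC LS : List (Finset V)}

lemma case7 (hV : Valid G W f LA LB LC LS)
    (hnot1 : ¬ ∃ p ∈ LC, p ⊆ U)
    (hnot2 : ¬ ∃ p ∈ LB, p ⊆ U)
    (hsl : C2Slack W U f LB LC)
    (hBslack : ∀ p ∈ LB, ∀ v ∈ p, v ∈ U → LC.length + LB.length + 1 ≤ f v)
    (hCslack : ∀ p ∈ LC, ∀ v ∈ p, v ∈ U → LC.length + LB.length + 1 ≤ f v)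
    (h7 : ∃ p ∈ LA, ∃ v ∈ p, v ∈ U) : StepGoal G W f U := by
  classical
  obtain ⟨a1, p, a2, hLA, hpU, hfirst⟩ := first_split (fun p => ∃ v ∈ p, v ∈ U) LA h7
  subst hLA
  have hpA : p ∈ a1 ++ p :: a2 := by simp
  have hp1 : p.card = 1 := hV.cardA p hpA
  have hpW : p ⊆ W := hV.subW (Or.inl hpA)
  have hn1 : 1 ≤ W.card := hp1 ▸ Finset.card_le_card hpW
  obtain ⟨a, hpa⟩ := Finset.card_eq_one.1 hp1
  have hpsubU : p ⊆ U := by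
    obtain ⟨v, hvp, hvU⟩ := hpU
    rw [hpa] at hvp ⊢
    rw [Finset.mem_singleton.1 hvp] at hvU
    simpa using hvU
  have hWI : (W \ p).card = W.card - 1 := by rw [Finset.card_sdiff_of_subset hpW, hp1]
  refine ⟨p, hpsubU, by rw [← Finset.card_pos, hp1]; omega,
    hV.indep (Or.inl hpA) (le_refl _), a1 ++ a2, LB, LC, LS, ?_⟩
  have hstr : Str G (W \ p) ((a1 ++ a2) ++ LB ++ LC ++ LS) := by
    have h0 : Str G W (p :: ((a1 ++ a2) ++ LB ++ LC ++ LS)) := by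
      refine hV.str.of_mseq ?_
      simp only [← Multiset.coe_add, ← Multiset.cons_coe, ← Multiset.singleton_add]
      abel
    have h1 := h0.step (I := p) (le_refl _)
    rw [Finset.sdiff_self] at h1
    exact h1.drop_empty
  have hmemA : ∀ q ∈ a1 ++ a2, q ∈ a1 ++ p :: a2 := by
    intro q hq; simp only [List.mem_append, List.mem_cons] at hq ⊢; tauto
  refine ⟨hstr, fun q hq => hV.cardA q (hmemA q hq), hV.cardB, hV.cardC, hV.cardS,
    ?_, ?_, ?_, ?_, ?_, ?_, ?_⟩
  · -- condA on a1 ++ a2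
    intro l1 r l2 heq v hv
    rcases split_two heq with ⟨t, ha1, hl2⟩ | ⟨t, hl1, ha2⟩
    · -- r in a1
      have hold : a1 ++ p :: a2 = l1 ++ r :: (t ++ p :: a2) := by rw [ha1]; simp
      have old := hV.condA l1 r (t ++ p :: a2) hold v hv
      have hvU : v ∉ U := fun hvU => hfirst r (by rw [ha1]; simp) ⟨v, hv, hvU⟩
      rw [df_eq hvU]
      exact old
    · -- r in a2
      have hold : a1 ++ p :: a2 = (a1 ++ p :: t) ++ r :: l2 := by rw [ha2]; simp
      have old := hV.condA (a1 ++ p :: t) r l2 hold v hv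
      refine le_df (fun hvU => ?_) (fun hvU => ?_) <;>
        (simp only [List.length_append, List.length_cons, List.length_nil, hl1] at old ⊢; omega)
  · intro l1 r l2 heq v hv
    have old := hV.condS l1 r l2 heq v hv
    refine le_df (fun hvU => ?_) (fun hvU => ?_) <;>
      (simp only [List.length_append, List.length_cons, List.length_nil] at old ⊢; omega)
  · intro q hq v hv
    have old := hV.condB1 q hq v hv
    refine le_df (fun hvU => hBslack q hq v hv hvU) (fun hvU => ?_) <;>
      (omega)
  · intro q hq
    have old := hV.condB2 q hq
    have hs := sum_le_sum_df (f := f) (U := U) q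
    have hnfr : ¬ q ⊆ U := fun h => hnot2 ⟨q, hq, h⟩
    have hf : (q.filter (· ∈ U)).card + 1 ≤ q.card := filter_card_lt q hnfr
    have hq2 : q.card = 2 := hV.cardB q hq
    omega
  · intro q hq v hv
    have old := hV.condC1 q hq v hv
    refine le_df (fun hvU => hCslack q hq v hv hvU) (fun hvU => ?_) <;>
      (omega)
  · intro q hq a' ha b hb hab
    have old := hV.condC2 q hq a' ha b hb hab
    by_cases haU : a' ∈ U <;> by_cases hbU : b ∈ U
    · have hslk := (hsl q hq a' ha b hb hab haU hbU).1
      have h1 : f a' - 1 ≤ df f U a' := df_ge_sub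
      have h2 : f b - 1 ≤ df f U b := df_ge_sub
      omega
    · rw [df_eq hbU]; have h1 : f a' - 1 ≤ df f U a' := df_ge_sub; omega
    · rw [df_eq haU]; have h2 : f b - 1 ≤ df f U b := df_ge_sub; omega
    · rw [df_eq haU, df_eq hbU]; omega
  · intro q hq
    have old := hV.condC3 q hq
    have hs := sum_le_sum_df (f := f) (U := U) q
    have hnfr : ¬ q ⊆ U := fun h => hnot1 ⟨q, hq, h⟩
    have hf : (q.filter (· ∈ U)).card + 1 ≤ q.card := filter_card_lt q hnfr
    have hq3 : q.card = 3 := hV.cardC q hq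
    have hn3 : 3 ≤ W.card := hq3 ▸ Finset.card_le_card (hV.subW (Or.inr (Or.inr (Or.inl hq))))
    simp only [List.length_append, List.length_cons, List.length_nil] at old ⊢
    omega

lemma case8 (hV : Valid G W f LA LB LC LS)
    (hnot2 : ¬ ∃ p ∈ LB, p ⊆ U)
    (hnoC2 : ∀ p ∈ LC, ∀ u ∈ p, ∀ w ∈ p, u ≠ w → u ∈ U → w ∈ U → False)
    (hBslack : ∀ p ∈ LB, ∀ v ∈ p, v ∈ U → LC.length + LB.length + 1 ≤ f v)
    (hCslack : ∀ p ∈ LC, ∀ v ∈ p, v ∈ U → LC.length + LB.length + 1 ≤ f v)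
    (hAU : ∀ p ∈ LA, ∀ v ∈ p, v ∉ U)
    (h8 : ∃ p ∈ LS, ∃ v ∈ p, v ∈ U) : StepGoal G W f U := by
  classical
  obtain ⟨s1, p, s2, hLS, hpU, hfirst⟩ := first_split (fun p => ∃ v ∈ p, v ∈ U) LS h8
  subst hLS
  have hpS : p ∈ s1 ++ p :: s2 := by simp
  have hpc : p.card = 1 ∨ p.card = 2 := hV.cardS p hpS
  have hpW : p ⊆ W := hV.subW (Or.inr (Or.inr (Or.inr hpS)))
  obtain ⟨x, hxp, hxU⟩ := hpU
  have hIp : p ∩ U ⊆ p := Finset.inter_subset_left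
  have hI1 : 1 ≤ (p ∩ U).card := Finset.card_pos.2 ⟨x, Finset.mem_inter.2 ⟨hxp, hxU⟩⟩
  have hIU : p ∩ U ⊆ U := Finset.inter_subset_right
  have hqcard : (p \ (p ∩ U)).card + (p ∩ U).card = p.card := by
    rw [Finset.card_sdiff_of_subset hIp]
    have := Finset.card_le_card hIp
    omega
  have hqU : ∀ v ∈ p \ (p ∩ U), v ∉ U := by
    intro v hv hvU
    have h := Finset.mem_sdiff.1 hv
    exact h.2 (Finset.mem_inter.2 ⟨h.1, hvU⟩)
  have hqp : ∀ v ∈ p \ (p ∩ U), v ∈ p := fun v hv => (Finset.mem_sdiff.1 hv).1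
  have hWI : (W \ (p ∩ U)).card = W.card - (p ∩ U).card :=
    Finset.card_sdiff_of_subset (hIp.trans hpW)
  have hstr0 : Str G W (p :: (LA ++ LB ++ LC ++ (s1 ++ s2))) := by
    refine hV.str.of_mseq ?_
    simp only [← Multiset.coe_add, ← Multiset.cons_coe, ← Multiset.singleton_add]
    abel
  have hfilter1 : ∀ q ∈ LC, (q.filter (· ∈ U)).card ≤ 1 := by
    intro q hq
    refine filter_card_le_one q ?_
    intro a ha haU b hb hbU
    by_contra hab
    exact hnoC2 q hq a ha b hb hab haU hbU
  -- common condition proofs (parameterized by new LS shape handled separately)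
  by_cases hqe : p \ (p ∩ U) = ∅
  · -- whole part coloured
    refine ⟨p ∩ U, hIU, ⟨x, Finset.mem_inter.2 ⟨hxp, hxU⟩⟩,
      hV.indep (Or.inr (Or.inr (Or.inr hpS))) hIp, LA, LB, LC, s1 ++ s2, ?_⟩
    have hstr : Str G (W \ (p ∩ U)) (LA ++ LB ++ LC ++ (s1 ++ s2)) := by
      have h1 := hstr0.step hIp
      rw [hqe] at h1
      exact h1.drop_empty
    have hmemS : ∀ q ∈ s1 ++ s2, q ∈ s1 ++ p :: s2 := by
      intro q hq; simp only [List.mem_append, List.mem_cons] at hq ⊢; tauto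
    refine ⟨hstr, hV.cardA, hV.cardB, hV.cardC, fun q hq => hV.cardS q (hmemS q hq),
      ?_, ?_, ?_, ?_, ?_, ?_, ?_⟩
    · intro l1 r l2 heq v hv
      have old := hV.condA l1 r l2 heq v hv
      rw [df_eq (hAU r (by rw [heq]; simp) v hv)]
      exact old
    · -- condS on s1 ++ s2
      intro l1 r l2 heq v hv
      rcases split_two heq with ⟨t, hs1, hl2⟩ | ⟨t, hl1, hs2⟩
      · have hold : s1 ++ p :: s2 = l1 ++ r :: (t ++ p :: s2) := by rw [hs1]; simp
        have old := hV.condS l1 r (t ++ p :: s2) hold v hv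
        have hvU : v ∉ U := fun hvU => hfirst r (by rw [hs1]; simp) ⟨v, hv, hvU⟩
        rw [df_eq hvU]
        exact old
      · have hold : s1 ++ p :: s2 = (s1 ++ p :: t) ++ r :: l2 := by rw [hs2]; simp
        have old := hV.condS (s1 ++ p :: t) r l2 hold v hv
        have hp1 : 1 ≤ p.card := by omega
        refine le_df (fun hvU => ?_) (fun hvU => ?_) <;>
          (simp only [List.length_append, List.length_cons, List.length_nil, hl1,
            List.map_append, List.map_cons, List.sum_append, List.sum_cons] at old ⊢; omega)
    · intro q hq v hv
      have old := hV.condB1 q hq v hv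
      exact le_df (fun hvU => hBslack q hq v hv hvU) (fun _ => old)
    · intro q hq
      have old := hV.condB2 q hq
      have hs := sum_le_sum_df (f := f) (U := U) q
      have hnfr : ¬ q ⊆ U := fun h => hnot2 ⟨q, hq, h⟩
      have hf : (q.filter (· ∈ U)).card + 1 ≤ q.card := filter_card_lt q hnfr
      have hq2 : q.card = 2 := hV.cardB q hq
      omega
    · intro q hq v hv
      have old := hV.condC1 q hq v hv
      exact le_df (fun hvU => hCslack q hq v hv hvU) (fun _ => old)
    · intro q hq a ha b hb hab
      have old := hV.condC2 q hq a ha b hb hab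
      by_cases haU : a ∈ U <;> by_cases hbU : b ∈ U
      · exact absurd (hnoC2 q hq a ha b hb hab haU hbU) not_false
      · rw [df_eq hbU]; have h1 : f a - 1 ≤ df f U a := df_ge_sub; omega
      · rw [df_eq haU]; have h2 : f b - 1 ≤ df f U b := df_ge_sub; omega
      · rw [df_eq haU, df_eq hbU]; omega
    · intro q hq
      have old := hV.condC3 q hq
      have hs := sum_le_sum_df (f := f) (U := U) q
      have hf := hfilter1 q hq
      have hq3 : q.card = 3 := hV.cardC q hq
      have hn3 : 3 ≤ W.card := hq3 ▸ Finset.card_le_card (hV.subW (Or.inr (Or.inr (Or.inl hq))))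
      omega
  · -- part survives with its uncoloured vertices
    refine ⟨p ∩ U, hIU, ⟨x, Finset.mem_inter.2 ⟨hxp, hxU⟩⟩,
      hV.indep (Or.inr (Or.inr (Or.inr hpS))) hIp, LA, LB, LC,
      s1 ++ (p \ (p ∩ U)) :: s2, ?_⟩
    have hstr : Str G (W \ (p ∩ U)) (LA ++ LB ++ LC ++ (s1 ++ (p \ (p ∩ U)) :: s2)) := by
      refine (hstr0.step hIp).of_mseq ?_
      simp only [← Multiset.coe_add, ← Multiset.cons_coe, ← Multiset.singleton_add]
      abel
    have hq1 : (p \ (p ∩ U)).card = 1 := by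
      have hne : 1 ≤ (p \ (p ∩ U)).card := Finset.card_pos.2 (Finset.nonempty_iff_ne_empty.2 hqe)
      omega
    refine ⟨hstr, hV.cardA, hV.cardB, hV.cardC, ?_, ?_, ?_, ?_, ?_, ?_, ?_, ?_⟩
    · intro q hq
      rcases List.mem_append.1 hq with hq | hq
      · exact hV.cardS q (by simp [hq])
      rcases List.mem_cons.1 hq with rfl | hq
      · left; exact hq1
      · exact hV.cardS q (by simp [hq])
    · intro l1 r l2 heq v hv
      have old := hV.condA l1 r l2 heq v hv
      rw [df_eq (hAU r (by rw [heq]; simp) v hv)]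
      exact old
    · -- condS on s1 ++ q :: s2
      intro l1 r l2 heq v hv
      rcases split_middle heq with ⟨t, hs1, hl2⟩ | ⟨hl1, hrq, hl2⟩ | ⟨t, hl1, hs2⟩
      · have hold : s1 ++ p :: s2 = l1 ++ r :: (t ++ p :: s2) := by rw [hs1]; simp
        have old := hV.condS l1 r (t ++ p :: s2) hold v hv
        have hvU : v ∉ U := fun hvU => hfirst r (by rw [hs1]; simp) ⟨v, hv, hvU⟩
        rw [df_eq hvU]
        exact old
      · subst hrq
        have old := hV.condS s1 p s2 rfl v (hqp v hv)
        rw [df_eq (hqU v hv), hl1]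
        exact old
      · have hold : s1 ++ p :: s2 = (s1 ++ p :: t) ++ r :: l2 := by rw [hs2]; simp
        have old := hV.condS (s1 ++ p :: t) r l2 hold v hv
        refine le_df (fun hvU => ?_) (fun hvU => ?_) <;>
          (simp only [List.length_append, List.length_cons, List.length_nil, hl1,
            List.map_append, List.map_cons, List.sum_append, List.sum_cons] at old ⊢; omega)
    · intro q hq v hv
      have old := hV.condB1 q hq v hv
      exact le_df (fun hvU => hBslack q hq v hv hvU) (fun _ => old)
    · intro q hq
      have old := hV.condB2 q hq
      have hs := sum_le_sum_df (f := f) (U := U) q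
      have hnfr : ¬ q ⊆ U := fun h => hnot2 ⟨q, hq, h⟩
      have hf : (q.filter (· ∈ U)).card + 1 ≤ q.card := filter_card_lt q hnfr
      have hq2 : q.card = 2 := hV.cardB q hq
      omega
    · intro q hq v hv
      have old := hV.condC1 q hq v hv
      exact le_df (fun hvU => hCslack q hq v hv hvU) (fun _ => old)
    · intro q hq a ha b hb hab
      have old := hV.condC2 q hq a ha b hb hab
      by_cases haU : a ∈ U <;> by_cases hbU : b ∈ U
      · exact absurd (hnoC2 q hq a ha b hb hab haU hbU) not_false
      · rw [df_eq hbU]; have h1 : f a - 1 ≤ df f U a := df_ge_sub; omega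
      · rw [df_eq haU]; have h2 : f b - 1 ≤ df f U b := df_ge_sub; omega
      · rw [df_eq haU, df_eq hbU]; omega
    · intro q hq
      have old := hV.condC3 q hq
      have hs := sum_le_sum_df (f := f) (U := U) q
      have hf := hfilter1 q hq
      have hq3 : q.card = 3 := hV.cardC q hq
      have hn3 : 3 ≤ W.card := hq3 ▸ Finset.card_le_card (hV.subW (Or.inr (Or.inr (Or.inl hq))))
      omega

end Step6

section Step7

variable {G : SimpleGraph V} {W U : Finset V} {f : V → ℕ} {LA LB LC LS : List (Finset V)}

lemma case10 (hV : Valid G W f LA LB LC LS)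
    (hnot1 : ¬ ∃ p ∈ LC, p ⊆ U)
    (hnot2 : ¬ ∃ p ∈ LB, p ⊆ U)
    (hnoC2 : ∀ p ∈ LC, ∀ u ∈ p, ∀ w ∈ p, u ≠ w → u ∈ U → w ∈ U → False)
    (hBslack : ∀ p ∈ LB, ∀ v ∈ p, v ∈ U → LC.length + LB.length + 1 ≤ f v)
    (hCslack : ∀ p ∈ LC, ∀ v ∈ p, v ∈ U → LC.length + LB.length + 1 ≤ f v)
    (hAU : ∀ p ∈ LA, ∀ v ∈ p, v ∉ U)
    (hSU : ∀ p ∈ LS, ∀ v ∈ p, v ∉ U)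
    (h10 : ∃ p ∈ LC, ∃ x ∈ p, x ∈ U) : StepGoal G W f U := by
  classical
  obtain ⟨p, hpC, x, hx, hxU⟩ := h10
  obtain ⟨c1, c2, hLC⟩ := List.append_of_mem hpC
  have hn := hV.card_eq
  subst hLC
  have hp3 : p.card = 3 := hV.cardC p hpC
  have hpW : p ⊆ W := hV.subW (Or.inr (Or.inr (Or.inl hpC)))
  have hn3 : 3 ≤ W.card := hp3 ▸ Finset.card_le_card hpW
  have hIp : ({x} : Finset V) ⊆ p := by simpa using hx
  have hWI : (W \ ({x} : Finset V)).card = W.card - 1 := by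
    rw [Finset.card_sdiff_of_subset (hIp.trans hpW), Finset.card_singleton]
  have hq2 : (p \ ({x} : Finset V)).card = 2 := by
    rw [Finset.card_sdiff_of_subset hIp, hp3, Finset.card_singleton]
  have hqp : ∀ v ∈ p \ ({x} : Finset V), v ∈ p ∧ v ≠ x := by
    intro v hv
    have h := Finset.mem_sdiff.1 hv
    exact ⟨h.1, by simpa using h.2⟩
  have hqU : ∀ v ∈ p \ ({x} : Finset V), v ∉ U := by
    intro v hv hvU
    obtain ⟨hvp, hvx⟩ := hqp v hv
    exact hnoC2 p hpC v hvp x hx hvx hvU hxU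
  have hfilter1 : ∀ q ∈ c1 ++ p :: c2, (q.filter (· ∈ U)).card ≤ 1 := by
    intro q hq
    refine filter_card_le_one q ?_
    intro a ha haU b hb hbU
    by_contra hab
    exact hnoC2 q hq a ha b hb hab haU hbU
  refine ⟨{x}, by simpa using hxU, ⟨x, by simp⟩,
    hV.indep (Or.inr (Or.inr (Or.inl hpC))) hIp,
    LA, LB ++ [p \ ({x} : Finset V)], c1 ++ c2, LS, ?_⟩
  have hstr : Str G (W \ ({x} : Finset V))
      (LA ++ (LB ++ [p \ ({x} : Finset V)]) ++ (c1 ++ c2) ++ LS) := by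
    have h0 : Str G W (p :: (LA ++ LB ++ (c1 ++ c2) ++ LS)) := by
      refine hV.str.of_mseq ?_
      simp only [← Multiset.coe_add, ← Multiset.cons_coe, ← Multiset.singleton_add]
      abel
    refine (h0.step hIp).of_mseq ?_
    simp only [← Multiset.coe_add, ← Multiset.cons_coe, ← Multiset.singleton_add]
    abel
  have hmemC : ∀ r ∈ c1 ++ c2, r ∈ c1 ++ p :: c2 := by
    intro r hr; simp only [List.mem_append, List.mem_cons] at hr ⊢; tauto
  refine ⟨hstr, hV.cardA, ?_, fun r hr => hV.cardC r (hmemC r hr), hV.cardS,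
    ?_, ?_, ?_, ?_, ?_, ?_, ?_⟩
  · intro q hq
    rcases List.mem_append.1 hq with hq | hq
    · exact hV.cardB q hq
    · rw [List.mem_singleton.1 hq]; exact hq2
  · intro l1 r l2 heq v hv
    have old := hV.condA l1 r l2 heq v hv
    rw [df_eq (hAU r (by rw [heq]; simp) v hv)]
    simp only [List.length_append, List.length_cons, List.length_nil] at old ⊢
    omega
  · intro l1 r l2 heq v hv
    have old := hV.condS l1 r l2 heq v hv
    rw [df_eq (hSU r (by rw [heq]; simp) v hv)]
    simp only [List.length_append, List.length_cons, List.length_nil] at old ⊢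
    omega
  · -- condB1 on LB ++ [q]
    intro q hq v hv
    rcases List.mem_append.1 hq with hq | hq
    · have old := hV.condB1 q hq v hv
      refine le_df (fun hvU => ?_) (fun hvU => ?_)
      · have := hBslack q hq v hv hvU
        simp only [List.length_append, List.length_cons, List.length_nil] at this ⊢; omega
      · simp only [List.length_append, List.length_cons, List.length_nil] at old ⊢; omega
    · rw [List.mem_singleton.1 hq] at hv
      have old := hV.condC1 p hpC v (hqp v hv).1
      rw [df_eq (hqU v hv)]
      simp only [List.length_append, List.length_cons, List.length_nil] at old ⊢; omega
  · -- condB2 on LB ++ [q]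
    intro q hq
    rcases List.mem_append.1 hq with hq | hq
    · have old := hV.condB2 q hq
      have hs := sum_le_sum_df (f := f) (U := U) q
      have hnfr : ¬ q ⊆ U := fun h => hnot2 ⟨q, hq, h⟩
      have hf : (q.filter (· ∈ U)).card + 1 ≤ q.card := filter_card_lt q hnfr
      have hq2' : q.card = 2 := hV.cardB q hq
      omega
    · rw [List.mem_singleton.1 hq]
      obtain ⟨y, z, hyz, hqyz⟩ := Finset.card_eq_two.1 hq2
      have hyq : y ∈ p \ ({x} : Finset V) := by rw [hqyz]; simp
      have hzq : z ∈ p \ ({x} : Finset V) := by rw [hqyz]; simp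
      have hc2 := hV.condC2 p hpC y (hqp y hyq).1 z (hqp z hzq).1 hyz
      have hsum : ∑ v ∈ p \ ({x} : Finset V), df f U v = f y + f z := by
        rw [hqyz, sum_pair hyz]
        rw [df_eq (hqU y hyq), df_eq (hqU z hzq)]
      rw [hsum, hWI]
      omega
  · intro q hq v hv
    have old := hV.condC1 q (hmemC q hq) v hv
    refine le_df (fun hvU => ?_) (fun hvU => ?_)
    · have := hCslack q (hmemC q hq) v hv hvU
      simp only [List.length_append, List.length_cons, List.length_nil] at this ⊢; omega
    · simp only [List.length_append, List.length_cons, List.length_nil] at old ⊢; omega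
  · intro q hq a ha b hb hab
    have old := hV.condC2 q (hmemC q hq) a ha b hb hab
    by_cases haU : a ∈ U <;> by_cases hbU : b ∈ U
    · exact absurd (hnoC2 q (hmemC q hq) a ha b hb hab haU hbU) not_false
    · rw [df_eq hbU]; have h1 : f a - 1 ≤ df f U a := df_ge_sub; omega
    · rw [df_eq haU]; have h2 : f b - 1 ≤ df f U b := df_ge_sub; omega
    · rw [df_eq haU, df_eq hbU]; omega
  · intro q hq
    have old := hV.condC3 q (hmemC q hq)
    have hs := sum_le_sum_df (f := f) (U := U) q
    have hf := hfilter1 q (hmemC q hq)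
    simp only [List.length_append, List.length_cons, List.length_nil] at old ⊢
    omega

lemma case9 (hV : Valid G W f LA LB LC LS)
    (hnot2 : ¬ ∃ p ∈ LB, p ⊆ U)
    (hAU : ∀ p ∈ LA, ∀ v ∈ p, v ∉ U)
    (hSU : ∀ p ∈ LS, ∀ v ∈ p, v ∉ U)
    (hCU : ∀ p ∈ LC, ∀ v ∈ p, v ∉ U)
    (h9 : ∃ p ∈ LB, ∃ x ∈ p, x ∈ U) : StepGoal G W f U := by
  classical
  obtain ⟨p, hpB, x, hx, hxU⟩ := h9
  obtain ⟨b1, b2, hLB⟩ := List.append_of_mem hpB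
  have hn := hV.card_eq
  subst hLB
  have hp2 : p.card = 2 := hV.cardB p hpB
  have hpW : p ⊆ W := hV.subW (Or.inr (Or.inl hpB))
  have hn2 : 2 ≤ W.card := hp2 ▸ Finset.card_le_card hpW
  have hnf : ¬ p ⊆ U := fun h => hnot2 ⟨p, hpB, h⟩
  obtain ⟨y, hqy, hyp, hyU, hyx⟩ := second_vertex hp2 hx hxU hnf
  have hIp : ({x} : Finset V) ⊆ p := by simpa using hx
  have hWI : (W \ ({x} : Finset V)).card = W.card - 1 := by
    rw [Finset.card_sdiff_of_subset (hIp.trans hpW), Finset.card_singleton]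
  have hq1 : (p \ ({x} : Finset V)).card = 1 := by rw [hqy, Finset.card_singleton]
  have hqmem : ∀ v ∈ p \ ({x} : Finset V), v = y := by
    intro v hv; rw [hqy] at hv; exact Finset.mem_singleton.1 hv
  refine ⟨{x}, by simpa using hxU, ⟨x, by simp⟩, hV.indep (Or.inr (Or.inl hpB)) hIp,
    (p \ ({x} : Finset V)) :: LA, b1 ++ b2, LC, LS, ?_⟩
  have hstr : Str G (W \ ({x} : Finset V))
      ((p \ ({x} : Finset V)) :: LA ++ (b1 ++ b2) ++ LC ++ LS) := by
    have h0 : Str G W (p :: (LA ++ (b1 ++ b2) ++ LC ++ LS)) := by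
      refine hV.str.of_mseq ?_
      simp only [← Multiset.coe_add, ← Multiset.cons_coe, ← Multiset.singleton_add]
      abel
    refine (h0.step hIp).of_mseq ?_
    simp only [← Multiset.coe_add, ← Multiset.cons_coe, ← Multiset.singleton_add]
    abel
  have hmemB : ∀ q ∈ b1 ++ b2, q ∈ b1 ++ p :: b2 := by
    intro q hq; simp only [List.mem_append, List.mem_cons] at hq ⊢; tauto
  refine ⟨hstr, ?_, fun q hq => hV.cardB q (hmemB q hq), hV.cardC, hV.cardS,
    ?_, ?_, ?_, ?_, ?_, ?_, ?_⟩
  · intro q hq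
    rcases List.mem_cons.1 hq with rfl | hq
    · exact hq1
    · exact hV.cardA q hq
  · -- condA on q :: LA
    intro l1 r l2 heq v hv
    rcases split_cons heq with ⟨hl1, hrq, hl2⟩ | ⟨t, hl1, hLA⟩
    · subst hrq
      have hvU : v ∉ U := by rw [hqmem v hv]; exact hyU
      have old := hV.condB1 p hpB v (Finset.mem_sdiff.1 hv).1
      rw [df_eq hvU]
      simp only [List.length_append, List.length_cons, List.length_nil, hl1] at old ⊢
      omega
    · have hrLA : r ∈ LA := by rw [hLA]; simp
      have old := hV.condA t r l2 hLA v hv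
      rw [df_eq (hAU r hrLA v hv)]
      simp only [List.length_append, List.length_cons, List.length_nil, hl1] at old ⊢
      omega
  · intro l1 r l2 heq v hv
    have old := hV.condS l1 r l2 heq v hv
    rw [df_eq (hSU r (by rw [heq]; simp) v hv)]
    simp only [List.length_append, List.length_cons, List.length_nil] at old ⊢
    omega
  · intro q hq v hv
    have old := hV.condB1 q (hmemB q hq) v hv
    refine le_df (fun hvU => ?_) (fun hvU => ?_) <;>
      (simp only [List.length_append, List.length_cons, List.length_nil] at old ⊢; omega)
  · intro q hq
    have old := hV.condB2 q (hmemB q hq)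
    have hs := sum_le_sum_df (f := f) (U := U) q
    have hnfr : ¬ q ⊆ U := fun h => hnot2 ⟨q, hmemB q hq, h⟩
    have hf : (q.filter (· ∈ U)).card + 1 ≤ q.card := filter_card_lt q hnfr
    have hq2 : q.card = 2 := hV.cardB q (hmemB q hq)
    omega
  · intro q hq v hv
    have old := hV.condC1 q hq v hv
    refine le_df (fun hvU => ?_) (fun hvU => ?_) <;>
      (simp only [List.length_append, List.length_cons, List.length_nil] at old ⊢; omega)
  · intro q hq a ha b hb hab
    have old := hV.condC2 q hq a ha b hb hab
    rw [df_eq (hCU q hq a ha), df_eq (hCU q hq b hb)]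
    omega
  · intro q hq
    have old := hV.condC3 q hq
    have hsum : ∑ v ∈ q, df f U v = ∑ v ∈ q, f v :=
      Finset.sum_congr rfl (fun v hv => df_eq (hCU q hq v hv))
    have hq3 : q.card = 3 := hV.cardC q hq
    have hn3 : 3 ≤ W.card := hq3 ▸ Finset.card_le_card (hV.subW (Or.inr (Or.inr (Or.inl hq))))
    rw [hsum]
    simp only [List.length_append, List.length_cons, List.length_nil] at old ⊢
    omega

end Step7

section Master

variable {G : SimpleGraph V} {W U : Finset V} {f : V → ℕ} {LA LB LC LS : List (Finset V)}

lemma step_lemma (hV : Valid G W f LA LB LC LS) (hUW : U ⊆ W) (hU : U.Nonempty) :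
    StepGoal G W f U := by
  classical
  by_cases h1 : ∃ p ∈ LC, p ⊆ U
  · exact case1 hV h1
  by_cases h2 : ∃ p ∈ LB, p ⊆ U
  · exact case2 hV h1 h2
  by_cases hC2 : ∃ p ∈ LC, ∃ u ∈ p, ∃ w ∈ p, u ≠ w ∧ u ∈ U ∧ w ∈ U
  · by_cases hPA : ∃ p ∈ LA, ∃ v ∈ p, v ∈ U
    · by_cases hbad : ∃ p ∈ LC, ∃ u ∈ p, ∃ w ∈ p, u ≠ w ∧ u ∈ U ∧ w ∈ U ∧
        (f u + f w < W.card ∨ f u ≤ LC.length + LB.length ∨ f w ≤ LC.length + LB.length)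
      · exact case4 hV h1 h2 hbad
      · have hsl : C2Slack W U f LB LC := by
          intro p hp u hu w hw huw huU hwU
          constructor
          · by_contra hcon
            exact hbad ⟨p, hp, u, hu, w, hw, huw, huU, hwU, Or.inl (by omega)⟩
          · by_contra hcon
            exact hbad ⟨p, hp, u, hu, w, hw, huw, huU, hwU, Or.inr (Or.inl (by omega))⟩
        by_cases h5 : ∃ p ∈ LB, ∃ x ∈ p, x ∈ U ∧ f x ≤ LC.length + LB.length
        · exact case5 hV h1 h2 hsl h5
        by_cases h6 : ∃ p ∈ LC, ∃ x ∈ p, x ∈ U ∧ f x ≤ LC.length + LB.length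
        · exact case6 hV h1 h2 hsl h6
        have hBslack : ∀ p ∈ LB, ∀ v ∈ p, v ∈ U → LC.length + LB.length + 1 ≤ f v := by
          intro p hp v hv hvU
          by_contra hcon
          exact h5 ⟨p, hp, v, hv, hvU, by omega⟩
        have hCslack : ∀ p ∈ LC, ∀ v ∈ p, v ∈ U → LC.length + LB.length + 1 ≤ f v := by
          intro p hp v hv hvU
          by_contra hcon
          exact h6 ⟨p, hp, v, hv, hvU, by omega⟩
        exact case7 hV h1 h2 hsl hBslack hCslack hPA
    · have hAU : ∀ p ∈ LA, ∀ v ∈ p, v ∉ U := by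
        intro p hp v hv hvU
        exact hPA ⟨p, hp, v, hv, hvU⟩
      exact case3 hV h1 h2 hAU hC2
  · -- no doubly-hit triple
    have hnoC2 : ∀ p ∈ LC, ∀ u ∈ p, ∀ w ∈ p, u ≠ w → u ∈ U → w ∈ U → False := by
      intro p hp u hu w hw huw huU hwU
      exact hC2 ⟨p, hp, u, hu, w, hw, huw, huU, hwU⟩
    have hsl : C2Slack W U f LB LC := by
      intro p hp u hu w hw huw huU hwU
      exact (hnoC2 p hp u hu w hw huw huU hwU).elim
    by_cases h5 : ∃ p ∈ LB, ∃ x ∈ p, x ∈ U ∧ f x ≤ LC.length + LB.length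
    · exact case5 hV h1 h2 hsl h5
    by_cases h6 : ∃ p ∈ LC, ∃ x ∈ p, x ∈ U ∧ f x ≤ LC.length + LB.length
    · exact case6 hV h1 h2 hsl h6
    have hBslack : ∀ p ∈ LB, ∀ v ∈ p, v ∈ U → LC.length + LB.length + 1 ≤ f v := by
      intro p hp v hv hvU
      by_contra hcon
      exact h5 ⟨p, hp, v, hv, hvU, by omega⟩
    have hCslack : ∀ p ∈ LC, ∀ v ∈ p, v ∈ U → LC.length + LB.length + 1 ≤ f v := by
      intro p hp v hv hvU
      by_contra hcon
      exact h6 ⟨p, hp, v, hv, hvU, by omega⟩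
    by_cases hPA : ∃ p ∈ LA, ∃ v ∈ p, v ∈ U
    · exact case7 hV h1 h2 hsl hBslack hCslack hPA
    have hAU : ∀ p ∈ LA, ∀ v ∈ p, v ∉ U := by
      intro p hp v hv hvU
      exact hPA ⟨p, hp, v, hv, hvU⟩
    by_cases h8 : ∃ p ∈ LS, ∃ v ∈ p, v ∈ U
    · exact case8 hV h2 hnoC2 hBslack hCslack hAU h8
    have hSU : ∀ p ∈ LS, ∀ v ∈ p, v ∉ U := by
      intro p hp v hv hvU
      exact h8 ⟨p, hp, v, hv, hvU⟩
    by_cases h10 : ∃ p ∈ LC, ∃ x ∈ p, x ∈ U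
    · exact case10 hV h1 h2 hnoC2 hBslack hCslack hAU hSU h10
    have hCU : ∀ p ∈ LC, ∀ v ∈ p, v ∉ U := by
      intro p hp v hv hvU
      exact h10 ⟨p, hp, v, hv, hvU⟩
    by_cases h9 : ∃ p ∈ LB, ∃ x ∈ p, x ∈ U
    · exact case9 hV h2 hAU hSU hCU h9
    exfalso
    obtain ⟨u, hu⟩ := hU
    obtain ⟨p, hp, hup⟩ := hV.str.1 u (hUW hu)
    simp only [List.mem_append] at hp
    rcases hp with ((hp | hp) | hp) | hp
    · exact hAU p hp u hup hu
    · exact h9 ⟨p, hp, u, hup, hu⟩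
    · exact h10 ⟨p, hp, u, hup, hu⟩
    · exact hSU p hp u hup hu

lemma valid_aux (G : SimpleGraph V) :
    ∀ (m : ℕ) (W : Finset V) (f : V → ℕ) (LA LB LC LS : List (Finset V)),
      Valid G W f LA LB LC LS → W.card ≤ m → OnlineChoosableAux G (m + 1) W f := by
  intro m
  induction m with
  | zero =>
    intro W f LA LB LC LS hV hcard
    have hW : W = ∅ := Finset.card_eq_zero.1 (Nat.le_antisymm hcard (Nat.zero_le _))
    subst hW
    exact Or.inl ⟨by simp, by simp⟩
  | succ m ih =>
    intro W f LA LB LC LS hV hcard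
    by_cases hE : ∃ u ∈ W, ∃ v ∈ W, G.Adj u v
    · refine Or.inr ⟨hE, ?_⟩
      intro U hUW hU
      obtain ⟨I, hIU, hIne, hind, LA', LB', LC', LS', hV'⟩ := step_lemma hV hUW hU
      refine ⟨I, hIU, hind, ?_⟩
      apply ih _ _ LA' LB' LC' LS' hV'
      have hIW : I ⊆ W := hIU.trans hUW
      have h1 : (W \ I).card = W.card - I.card := Finset.card_sdiff_of_subset hIW
      have h2 : 1 ≤ I.card := Finset.card_pos.2 hIne
      omega
    · refine Or.inl ⟨fun u hu v hv hadj => hE ⟨u, hu, v, hv, hadj⟩, ?_⟩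
      intro v hv
      obtain ⟨p, hp, hvp⟩ := hV.str.1 v hv
      simp only [List.mem_append] at hp
      rcases hp with ((hp | hp) | hp) | hp
      · obtain ⟨a1, a2, hLA⟩ := List.append_of_mem hp
        have := hV.condA a1 p a2 hLA v hvp
        omega
      · have := hV.condB1 p hp v hvp
        have hlen : 1 ≤ LB.length := List.length_pos_iff.2 (List.ne_nil_of_mem hp)
        omega
      · have := hV.condC1 p hp v hvp
        have hlen : 1 ≤ LC.length := List.length_pos_iff.2 (List.ne_nil_of_mem hp)
        omega
      · obtain ⟨s1, s2, hLS⟩ := List.append_of_mem hp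
        have := hV.condS s1 p s2 hLS v hvp
        omega

end Master

section Glue

lemma ofFn_split {α : Type*} {n : ℕ} {g : Fin n → α} {l1 l2 : List α} {p : α}
    (h : List.ofFn g = l1 ++ p :: l2) :
    ∃ i : Fin n, (i : ℕ) = l1.length ∧ g i = p ∧ l1 = (List.ofFn g).take l1.length := by
  have hlen : n = l1.length + (l2.length + 1) := by
    have := congrArg List.length h
    simpa [List.length_ofFn, List.length_append] using this
  have hlt : l1.length < n := by omega
  refine ⟨⟨l1.length, hlt⟩, rfl, ?_, ?_⟩
  · have h1 : (List.ofFn g)[l1.length]'(by simp [List.length_ofFn]; omega) = p := by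
      rw [List.getElem_of_eq h, List.getElem_append_right (le_refl _)]
      simp
    rw [List.getElem_ofFn] at h1
    exact h1
  · rw [h, List.take_left]

lemma sum_take_ofFn {n : ℕ} (g : Fin n → ℕ) (i : ℕ) (hi : i ≤ n) :
    ((List.ofFn g).take i).sum = ∑ j ∈ Finset.univ.filter (fun j : Fin n => (j : ℕ) < i), g j := by
  induction i with
  | zero => simp
  | succ i ih =>
    have hi' : i < n := hi
    have hlen : i < (List.ofFn g).length := by simp [List.length_ofFn]; omega
    rw [List.take_succ]
    have hget : (List.ofFn g)[i]? = some (g ⟨i, hi'⟩) := by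
      rw [List.getElem?_eq_getElem hlen, List.getElem_ofFn]
    rw [hget]
    simp only [Option.toList_some, List.sum_append, List.sum_cons, List.sum_nil]
    rw [ih (by omega)]
    have hset : Finset.univ.filter (fun j : Fin n => (j : ℕ) < i + 1) =
        insert ⟨i, hi'⟩ (Finset.univ.filter (fun j : Fin n => (j : ℕ) < i)) := by
      ext j
      simp only [Finset.mem_filter, Finset.mem_insert, Finset.mem_univ, true_and]
      constructor
      · intro hj
        by_cases hji : (j : ℕ) = i
        · left; exact Fin.ext hji
        · right; omega
      · rintro (rfl | hj)
        · simp
        · omega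
    rw [hset, Finset.sum_insert (by simp)]
    omega

end Glue

open Finset in
/-- The main technical lemma (Lemma 2 of the paper).  `G` is a complete multipartite
graph whose parts are the fibres of `P`; parts are labelled by
`Fin k₁ ⊕ Fin k₂ ⊕ Fin k₃ ⊕ Fin s`, corresponding to the (ordered) classes
`𝒜 = (A₁,…,A_{k₁})` of parts of size 1, `ℬ` of parts of size 2, `𝒞` of parts of size 3,
and the ordered class `𝒮 = (S₁,…,S_s)` of parts of size `σ i ∈ {1,2}`.
(`Fin` is 0-indexed, so the `i`-th part in the 1-indexed statement corresponds to the
index `i` with value `(i : ℕ) + 1`, and `v_S(i) = 1 + ∑_{j<i} |S_j|`.)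
Under conditions (1), (1'), (2.1), (2.2), (3.1), (3.2), (3.3) on `f`,
`G` is on-line `f`-choosable. -/
theorem online_choosable_of_technical_conditions
    (k₁ k₂ k₃ s : ℕ) (σ : Fin s → ℕ)
    (P : V → Fin k₁ ⊕ Fin k₂ ⊕ Fin k₃ ⊕ Fin s)
    (G : SimpleGraph V)
    (hAdj : ∀ u v, G.Adj u v ↔ P u ≠ P v)
    (hA : ∀ i : Fin k₁, (univ.filter fun v => P v = Sum.inl i).card = 1)
    (hB : ∀ i : Fin k₂, (univ.filter fun v => P v = Sum.inr (Sum.inl i)).card = 2)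
    (hC : ∀ i : Fin k₃, (univ.filter fun v => P v = Sum.inr (Sum.inr (Sum.inl i))).card = 3)
    (hσ : ∀ i : Fin s, σ i = 1 ∨ σ i = 2)
    (hS : ∀ i : Fin s, (univ.filter fun v => P v = Sum.inr (Sum.inr (Sum.inr i))).card = σ i)
    (f : V → ℕ)
    (h1 : ∀ i : Fin k₁, ∀ v, P v = Sum.inl i →
      k₃ + k₂ + ((i : ℕ) + 1) ≤ f v)
    (h1' : ∀ i : Fin s, ∀ v, P v = Sum.inr (Sum.inr (Sum.inr i)) →
      2 * k₃ + k₂ + k₁ + (1 + ∑ j ∈ univ.filter (fun j : Fin s => (j : ℕ) < (i : ℕ)), σ j)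
        ≤ f v)
    (h21 : ∀ i : Fin k₂, ∀ v, P v = Sum.inr (Sum.inl i) → k₃ + k₂ ≤ f v)
    (h22 : ∀ i : Fin k₂,
      Fintype.card V ≤ ∑ v ∈ univ.filter (fun v => P v = Sum.inr (Sum.inl i)), f v)
    (h31 : ∀ i : Fin k₃, ∀ v, P v = Sum.inr (Sum.inr (Sum.inl i)) → k₃ + k₂ ≤ f v)
    (h32 : ∀ i : Fin k₃, ∀ u v, P u = Sum.inr (Sum.inr (Sum.inl i)) →
      P v = Sum.inr (Sum.inr (Sum.inl i)) → u ≠ v → Fintype.card V - 1 ≤ f u + f v)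
    (h33 : ∀ i : Fin k₃,
      Fintype.card V - 1 + k₃ + k₂ + k₁ ≤
        ∑ v ∈ univ.filter (fun v => P v = Sum.inr (Sum.inr (Sum.inl i))), f v) :
    OnlineChoosable G Finset.univ f := by
  classical
  have hcardV : (Finset.univ : Finset V).card = Fintype.card V := Finset.card_univ
  refine ⟨Finset.univ.card + 1, valid_aux G Finset.univ.card Finset.univ f
    (List.ofFn fun i : Fin k₁ => Finset.univ.filter fun v => P v = Sum.inl i)
    (List.ofFn fun i : Fin k₂ => Finset.univ.filter fun v => P v = Sum.inr (Sum.inl i))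
    (List.ofFn fun i : Fin k₃ => Finset.univ.filter fun v => P v = Sum.inr (Sum.inr (Sum.inl i)))
    (List.ofFn fun i : Fin s => Finset.univ.filter fun v => P v = Sum.inr (Sum.inr (Sum.inr i)))
    ?_ (le_refl _)⟩
  have hdisj : ∀ (ℓ1 ℓ2 : Fin k₁ ⊕ Fin k₂ ⊕ Fin k₃ ⊕ Fin s), ℓ1 ≠ ℓ2 → ∀ v : V,
      v ∈ Finset.univ.filter (fun v => P v = ℓ1) → v ∉ Finset.univ.filter (fun v => P v = ℓ2) := by
    intro ℓ1 ℓ2 hne v hv1 hv2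
    simp only [Finset.mem_filter] at hv1 hv2
    exact hne (hv1.2 ▸ hv2.2)
  have hfibmem : ∀ ℓ : Fin k₁ ⊕ Fin k₂ ⊕ Fin k₃ ⊕ Fin s,
      (Finset.univ.filter fun v => P v = ℓ) ∈
        (List.ofFn fun i : Fin k₁ => Finset.univ.filter fun v => P v = Sum.inl i) ++
        (List.ofFn fun i : Fin k₂ => Finset.univ.filter fun v => P v = Sum.inr (Sum.inl i)) ++
        (List.ofFn fun i : Fin k₃ =>
          Finset.univ.filter fun v => P v = Sum.inr (Sum.inr (Sum.inl i))) ++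
        (List.ofFn fun i : Fin s =>
          Finset.univ.filter fun v => P v = Sum.inr (Sum.inr (Sum.inr i))) := by
    intro ℓ
    simp only [List.mem_append, List.mem_ofFn, Set.mem_range]
    rcases ℓ with i | i | i | i
    · exact Or.inl (Or.inl (Or.inl ⟨i, rfl⟩))
    · exact Or.inl (Or.inl (Or.inr ⟨i, rfl⟩))
    · exact Or.inl (Or.inr ⟨i, rfl⟩)
    · exact Or.inr ⟨i, rfl⟩
  have hparts : ∀ p, p ∈
        (List.ofFn fun i : Fin k₁ => Finset.univ.filter fun v => P v = Sum.inl i) ++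
        (List.ofFn fun i : Fin k₂ => Finset.univ.filter fun v => P v = Sum.inr (Sum.inl i)) ++
        (List.ofFn fun i : Fin k₃ =>
          Finset.univ.filter fun v => P v = Sum.inr (Sum.inr (Sum.inl i))) ++
        (List.ofFn fun i : Fin s =>
          Finset.univ.filter fun v => P v = Sum.inr (Sum.inr (Sum.inr i))) →
      ∃ ℓ, p = Finset.univ.filter fun v => P v = ℓ := by
    intro p hp
    simp only [List.mem_append, List.mem_ofFn, Set.mem_range] at hp
    rcases hp with ((⟨i, rfl⟩ | ⟨i, rfl⟩) | ⟨i, rfl⟩) | ⟨i, rfl⟩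
    · exact ⟨Sum.inl i, rfl⟩
    · exact ⟨Sum.inr (Sum.inl i), rfl⟩
    · exact ⟨Sum.inr (Sum.inr (Sum.inl i)), rfl⟩
    · exact ⟨Sum.inr (Sum.inr (Sum.inr i)), rfl⟩
  refine ⟨⟨?_, fun p _ => p.subset_univ, ?_, ?_⟩, ?_, ?_, ?_, ?_, ?_, ?_, ?_, ?_, ?_, ?_, ?_⟩
  · -- cover
    intro v _
    exact ⟨Finset.univ.filter fun u => P u = P v, hfibmem (P v), by simp⟩
  · -- pairwise disjointness
    simp only [List.pairwise_append, List.pairwise_ofFn]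
    refine ⟨⟨⟨?_, ?_, ?_⟩, ?_, ?_⟩, ?_, ?_⟩
    · intro i j hij
      exact hdisj _ _ (by simp [Fin.ne_of_lt hij]) 
    · intro i j hij
      exact hdisj _ _ (by simp [Fin.ne_of_lt hij])
    · intro a ha b hb
      simp only [List.mem_ofFn, Set.mem_range] at ha hb
      obtain ⟨i, rfl⟩ := ha; obtain ⟨j, rfl⟩ := hb
      exact hdisj _ _ (by simp)
    · intro i j hij
      exact hdisj _ _ (by simp [Fin.ne_of_lt hij])
    · intro a ha b hb
      simp only [List.mem_append, List.mem_ofFn, Set.mem_range] at ha hb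
      obtain ⟨j, rfl⟩ := hb
      rcases ha with ⟨i, rfl⟩ | ⟨i, rfl⟩
      · exact hdisj _ _ (by simp)
      · exact hdisj _ _ (by simp)
    · intro i j hij
      exact hdisj _ _ (by simp [Fin.ne_of_lt hij])
    · intro a ha b hb
      simp only [List.mem_append, List.mem_ofFn, Set.mem_range] at ha hb
      obtain ⟨j, rfl⟩ := hb
      rcases ha with (⟨i, rfl⟩ | ⟨i, rfl⟩) | ⟨i, rfl⟩
      · exact hdisj _ _ (by simp)
      · exact hdisj _ _ (by simp)
      · exact hdisj _ _ (by simp)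
  · -- adjacency
    intro u _ v _
    rw [hAdj u v]
    constructor
    · rintro hne ⟨p, hp, hup, hvp⟩
      obtain ⟨ℓ, rfl⟩ := hparts p hp
      simp only [Finset.mem_filter] at hup hvp
      exact hne (hup.2.trans hvp.2.symm)
    · intro hnex heq
      exact hnex ⟨Finset.univ.filter fun w => P w = P v, hfibmem (P v), by simp [heq], by simp⟩
  · -- cardA
    intro p hp
    simp only [List.mem_ofFn, Set.mem_range] at hp
    obtain ⟨i, rfl⟩ := hp
    exact hA i
  · intro p hp
    simp only [List.mem_ofFn, Set.mem_range] at hp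
    obtain ⟨i, rfl⟩ := hp
    exact hB i
  · intro p hp
    simp only [List.mem_ofFn, Set.mem_range] at hp
    obtain ⟨i, rfl⟩ := hp
    exact hC i
  · intro p hp
    simp only [List.mem_ofFn, Set.mem_range] at hp
    obtain ⟨i, rfl⟩ := hp
    rcases hσ i with h | h
    · left; rw [hS i, h]
    · right; rw [hS i, h]
  · -- condA
    intro l1 p l2 heq v hv
    obtain ⟨i, hival, hgi, -⟩ := ofFn_split heq
    rw [← hgi] at hv
    simp only [Finset.mem_filter] at hv
    have := h1 i v hv.2
    simp only [List.length_ofFn]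
    omega
  · -- condS
    intro l1 p l2 heq v hv
    obtain ⟨i, hival, hgi, hl1⟩ := ofFn_split heq
    rw [← hgi] at hv
    simp only [Finset.mem_filter] at hv
    have hmain := h1' i v hv.2
    have hl1' : l1 = (List.ofFn fun i : Fin s =>
        Finset.univ.filter fun v => P v = Sum.inr (Sum.inr (Sum.inr i))).take (i : ℕ) := by
      rw [hival]; exact hl1
    have hsum : (l1.map Finset.card).sum =
        ∑ j ∈ Finset.univ.filter (fun j : Fin s => (j : ℕ) < (i : ℕ)), σ j := by
      rw [hl1', List.map_take, List.map_ofFn, sum_take_ofFn _ _ (le_of_lt i.isLt)]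
      exact Finset.sum_congr rfl (fun j _ => hS j)
    simp only [List.length_ofFn]
    omega
  · -- condB1
    intro p hp v hv
    simp only [List.mem_ofFn, Set.mem_range] at hp
    obtain ⟨i, rfl⟩ := hp
    simp only [Finset.mem_filter] at hv
    have := h21 i v hv.2
    simp only [List.length_ofFn]
    omega
  · -- condB2
    intro p hp
    simp only [List.mem_ofFn, Set.mem_range] at hp
    obtain ⟨i, rfl⟩ := hp
    have := h22 i
    omega
  · -- condC1
    intro p hp v hv
    simp only [List.mem_ofFn, Set.mem_range] at hp
    obtain ⟨i, rfl⟩ := hp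
    simp only [Finset.mem_filter] at hv
    have := h31 i v hv.2
    simp only [List.length_ofFn]
    omega
  · -- condC2
    intro p hp u hu v hv huv
    simp only [List.mem_ofFn, Set.mem_range] at hp
    obtain ⟨i, rfl⟩ := hp
    simp only [Finset.mem_filter] at hu hv
    have := h32 i u v hu.2 hv.2 huv
    omega
  · -- condC3
    intro p hp
    simp only [List.mem_ofFn, Set.mem_range] at hp
    obtain ⟨i, rfl⟩ := hp
    have := h33 i
    simp only [List.length_ofFn]
    omega
end

section
/- A finite simple graph G is k-choosable provided that G is L-colourable for every list assignment L with |L(v)| = k for all vertices v and with the total number of colours |⋃_{v∈V(G)} L(v)| strictly less than |V(G)|. -/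
variable {V : Type} [Fintype V] [DecidableEq V]

/-- `G` is `f`-choosable: for every list assignment `L` with `|L(v)| = f(v)` for all `v`,
there is a proper colouring of `G` choosing each colour from the corresponding list. -/
def Choosable (G : SimpleGraph V) (f : V → ℕ) : Prop :=
  ∀ L : V → Finset ℕ, (∀ v, (L v).card = f v) →
    ∃ c : V → ℕ, (∀ v, c v ∈ L v) ∧ ∀ u v, G.Adj u v → c u ≠ c v

/-- The choice number: least `k` such that `G` is `k`-choosable. -/
noncomputable def choiceNumber (G : SimpleGraph V) : ℕ :=
  sInf {k | Choosable G fun _ => k}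

open Finset in
/-- A graph is `k`-choosable provided it is `L`-colourable for every list assignment `L`
with all lists of size `k` and whose total number of colours is less than `|V(G)|`. -/
theorem choosable_of_colourable_of_few_colours (G : SimpleGraph V) (k : ℕ)
    (h : ∀ L : V → Finset ℕ, (∀ v, (L v).card = k) →
      (univ.biUnion L).card < Fintype.card V →
      ∃ c : V → ℕ, (∀ v, c v ∈ L v) ∧ ∀ u v, G.Adj u v → c u ≠ c v) :
    Choosable G fun _ => k := by
  classical
  intro L hL
  by_cases hpot : (univ.biUnion L).card < Fintype.card V
  · exact h L hL hpot
  push_neg at hpot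
  by_cases hall : ∀ T : Finset V, T.card ≤ (T.biUnion L).card
  · obtain ⟨c, hinj, hc⟩ := (Finset.all_card_le_biUnion_card_iff_exists_injective L).mp hall
    exact ⟨c, hc, fun u v huv he => G.ne_of_adj huv (hinj he)⟩
  push_neg at hall
  obtain ⟨T₀, hT₀⟩ := hall
  -- choose S maximizing the deficiency `d S = S.card - (S.biUnion L).card`
  obtain ⟨S, -, hSmax⟩ := Finset.exists_max_image Finset.univ
    (fun S : Finset V => S.card - (S.biUnion L).card) ⟨∅, mem_univ _⟩
  have hSmax : ∀ S' : Finset V, S'.card - (S'.biUnion L).card ≤ S.card - (S.biUnion L).card :=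
    fun S' => hSmax S' (mem_univ _)
  set LS := S.biUnion L with hLS
  have hLSlt : LS.card < S.card := by
    have := hSmax T₀
    omega
  -- S is nonempty, so `k ≤ LS.card`
  obtain ⟨v₀, hv₀⟩ : S.Nonempty := by
    rcases S.eq_empty_or_nonempty with rfl | hS
    · simp at hLSlt
    · exact hS
  have hkLS : k ≤ LS.card := by
    calc k = (L v₀).card := (hL v₀).symm
    _ ≤ LS.card := card_le_card (subset_biUnion_of_mem L hv₀)
  -- Hall's condition for the vertices outside S with colours outside LS
  have hall2 : ∀ s : Finset {v : V // v ∉ S}, s.card ≤ (s.biUnion fun v => L v.1 \ LS).card := by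
    intro s
    set T := s.image Subtype.val with hT
    have hTcard : T.card = s.card := card_image_of_injective _ Subtype.val_injective
    have hdisj : Disjoint S T := by
      rw [disjoint_right]
      intro a ha
      simp only [hT, mem_image] at ha
      obtain ⟨⟨a', ha'⟩, -, rfl⟩ := ha
      exact ha'
    have hbU : (s.biUnion fun v => L v.1 \ LS) = (T.biUnion L) \ LS := by
      ext x
      simp only [hT, image_biUnion, mem_biUnion, mem_sdiff]
      tauto
    have h1 : (S ∪ T).card - ((S ∪ T).biUnion L).card ≤ S.card - LS.card := hSmax _
    have h2 : (S ∪ T).card = S.card + T.card := card_union_of_disjoint hdisj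
    have h3 : (S ∪ T).biUnion L = LS ∪ T.biUnion L := by
      ext x
      simp only [hLS, mem_biUnion, mem_union]
      constructor
      · rintro ⟨v, hv | hv, hx⟩
        · exact Or.inl ⟨v, hv, hx⟩
        · exact Or.inr ⟨v, hv, hx⟩
      · rintro (⟨v, hv, hx⟩ | ⟨v, hv, hx⟩)
        · exact ⟨v, Or.inl hv, hx⟩
        · exact ⟨v, Or.inr hv, hx⟩
    have h4 : ((T.biUnion L) \ LS).card + LS.card = (T.biUnion L ∪ LS).card :=
      card_sdiff_add_card _ _
    rw [hbU]
    rw [h2, h3, union_comm LS] at h1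
    omega
  obtain ⟨g, hginj, hg⟩ :=
    (Finset.all_card_le_biUnion_card_iff_exists_injective (fun v : {v : V // v ∉ S} => L v.1 \ LS)).mp hall2
  have hgL : ∀ v, g v ∈ L v.1 := fun v => (mem_sdiff.mp (hg v)).1
  have hgLS : ∀ v, g v ∉ LS := fun v => (mem_sdiff.mp (hg v)).2
  -- a fixed set of k-1 colours inside LS
  obtain ⟨C, hCsub, hCcard⟩ : ∃ C ⊆ LS, C.card = k - 1 :=
    Finset.exists_subset_card_eq (by omega)
  have hk1 : 1 ≤ k := by
    by_contra hk
    have hk0 : k = 0 := by omega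
    have hempty : univ.biUnion L = ∅ := by
      apply eq_empty_of_forall_notMem
      intro x hx
      obtain ⟨v, -, hv⟩ := mem_biUnion.mp hx
      have hv0 := hL v
      rw [hk0, card_eq_zero] at hv0
      simp [hv0] at hv
    rw [hempty, card_empty] at hpot
    have : 0 < Fintype.card V := Fintype.card_pos_iff.mpr ⟨v₀⟩
    omega
  -- the reduced list assignment
  set L'' : V → Finset ℕ := fun v => if hv : v ∈ S then L v else insert (g ⟨v, hv⟩) C with hL''
  have hL''card : ∀ v, (L'' v).card = k := by
    intro v
    by_cases hv : v ∈ S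
    · simp [hL'', hv, hL v]
    · have hnot : g ⟨v, hv⟩ ∉ C := fun hc => hgLS _ (hCsub hc)
      simp [hL'', hv, card_insert_of_notMem hnot, hCcard]
      omega
  have hpot'' : (univ.biUnion L'').card < Fintype.card V := by
    have hsub : univ.biUnion L'' ⊆ LS ∪ (univ.image fun v : {v : V // v ∉ S} => g v) := by
      intro x hx
      obtain ⟨v, -, hv⟩ := mem_biUnion.mp hx
      by_cases hvS : v ∈ S
      · simp only [hL'', dif_pos hvS] at hv
        exact mem_union_left _ (mem_biUnion.mpr ⟨v, hvS, hv⟩)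
      · simp only [hL'', dif_neg hvS, mem_insert] at hv
        rcases hv with rfl | hv
        · exact mem_union_right _ (mem_image.mpr ⟨⟨v, hvS⟩, mem_univ _, rfl⟩)
        · exact mem_union_left _ (hCsub hv)
    have h1 : (univ.biUnion L'').card ≤ LS.card + Fintype.card {v : V // v ∉ S} := by
      calc (univ.biUnion L'').card ≤ (LS ∪ (univ.image fun v : {v : V // v ∉ S} => g v)).card :=
            card_le_card hsub
        _ ≤ LS.card + (univ.image fun v : {v : V // v ∉ S} => g v).card := card_union_le _ _
        _ ≤ LS.card + Fintype.card {v : V // v ∉ S} := by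
            exact Nat.add_le_add_left (card_image_le.trans (le_of_eq (card_univ))) _
    have h2 : Fintype.card {v : V // v ∉ S} = Fintype.card V - S.card := by
      rw [Fintype.card_subtype]
      rw [Finset.filter_not, Finset.card_sdiff_of_subset (by intro x hx; exact mem_univ x)]
      congr 1
      simp [Finset.filter_mem_eq_inter]
    have h3 : S.card ≤ Fintype.card V := card_le_card (subset_univ S) |>.trans (le_of_eq card_univ)
    omega
  obtain ⟨c'', hc''mem, hc''prop⟩ := h L'' hL''card hpot''
  refine ⟨fun v => if hv : v ∈ S then c'' v else g ⟨v, hv⟩, ?_, ?_⟩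
  · intro v
    by_cases hv : v ∈ S
    · have := hc''mem v
      simp only [hL'', dif_pos hv] at this ⊢
      exact this
    · simp only [dif_neg hv]
      exact hgL _
  · intro u v huv heq
    by_cases hu : u ∈ S <;> by_cases hv : v ∈ S
    · simp only [dif_pos hu, dif_pos hv] at heq
      exact hc''prop u v huv heq
    · simp only [dif_pos hu, dif_neg hv] at heq
      have h1 : c'' u ∈ LS := by
        have := hc''mem u
        simp only [hL'', dif_pos hu] at this
        exact mem_biUnion.mpr ⟨u, hu, this⟩
      rw [heq] at h1
      exact hgLS _ h1
    · simp only [dif_neg hu, dif_pos hv] at heq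
      have h1 : c'' v ∈ LS := by
        have := hc''mem v
        simp only [hL'', dif_pos hv] at this
        exact mem_biUnion.mpr ⟨v, hv, this⟩
      rw [← heq] at h1
      exact hgLS _ h1
    · simp only [dif_neg hu, dif_neg hv] at heq
      have := hginj heq
      exact G.ne_of_adj huv (congrArg Subtype.val this)
end

section
/- For every positive integer k, the choice number of the complete k-partite graph with all parts of size 3 is at least ⌈(4k − 1)/3⌉: ch(K_{3⋆k}) ≥ ⌈(4k − 1)/3⌉. Concretely, setting q = ⌈(4k − 1)/3⌉ − 1 and taking pairwise disjoint colour sets A, B, C with |A| = ⌊q/2⌋ and |B| = |C| = ⌈q/2⌉, the list assignment giving the three vertices of each part of K_{3⋆k} the lists A ∪ B, B ∪ C and A ∪ C respectively has all lists of size at least q and admits no proper colouring from the lists. -/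
variable {V : Type} [Fintype V] [DecidableEq V]

/-- The complete `k`-partite graph `K_{3⋆k}` with all `k` parts of size 3:
vertices are pairs `(i, j) : Fin k × Fin 3`, and two vertices are adjacent
iff they lie in different parts, i.e. differ in the first coordinate. -/
def K3k (k : ℕ) : SimpleGraph (Fin k × Fin 3) where
  Adj u v := u.1 ≠ v.1
  symm := ⟨fun _ _ h => Ne.symm h⟩
  loopless := ⟨fun _ h => h rfl⟩

/-- Every graph is choosable with lists of size `|V|` (Hall's theorem / SDR). -/
lemma choosable_card (G : SimpleGraph V) : Choosable G (fun _ => Fintype.card V) := by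
  intro L hL
  have hall : ∀ s : Finset V, s.card ≤ (s.biUnion L).card := by
    intro s
    rcases s.eq_empty_or_nonempty with rfl | ⟨x, hx⟩
    · simp
    · calc s.card ≤ Fintype.card V := s.card_le_univ.trans (by simp)
        _ = (L x).card := (hL x).symm
        _ ≤ (s.biUnion L).card :=
            Finset.card_le_card (fun y hy => Finset.mem_biUnion.mpr ⟨x, hx, hy⟩)
  obtain ⟨c, hinj, hmem⟩ :=
    (Finset.all_card_le_biUnion_card_iff_exists_injective L).mp hall
  exact ⟨c, hmem, fun u v hadj => fun h => G.ne_of_adj hadj (hinj h)⟩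

lemma K3k_no_colouring (k : ℕ) (q : ℕ)
    (hq : q / 2 + (q + 1) / 2 + (q + 1) / 2 < 2 * k)
    (A B C : Finset ℕ) (hAB : Disjoint A B) (hAC : Disjoint A C) (hBC : Disjoint B C)
    (hA : A.card = q / 2) (hB : B.card = (q + 1) / 2) (hC : C.card = (q + 1) / 2)
    (L : Fin k × Fin 3 → Finset ℕ)
    (hL : L = fun v => if v.2 = 0 then A ∪ B else if v.2 = 1 then B ∪ C else A ∪ C) :
    ¬ ∃ c : Fin k × Fin 3 → ℕ,
        (∀ v, c v ∈ L v) ∧ ∀ u v, (K3k k).Adj u v → c u ≠ c v := by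
  rintro ⟨c, hc, hprop⟩
  subst hL
  have hmem0 : ∀ i : Fin k, c (i, 0) ∈ A ∪ B := fun i => by simpa using hc (i, 0)
  have hmem1 : ∀ i : Fin k, c (i, 1) ∈ B ∪ C := fun i => by simpa using hc (i, 1)
  have hmem2 : ∀ i : Fin k, c (i, 2) ∈ A ∪ C := fun i => by simpa using hc (i, 2)
  set S : Fin k → Finset ℕ := fun i => {c (i, 0), c (i, 1), c (i, 2)} with hS
  have h2 : ∀ i, 2 ≤ (S i).card := by
    intro i
    by_contra h
    push_neg at h
    have hle : (S i).card ≤ 1 := by omega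
    have hall := Finset.card_le_one.mp hle
    have m0 : c (i, 0) ∈ S i := by simp [hS]
    have m1 : c (i, 1) ∈ S i := by simp [hS]
    have m2 : c (i, 2) ∈ S i := by simp [hS]
    have e1 : c (i, 1) = c (i, 0) := hall _ m1 _ m0
    have e2 : c (i, 2) = c (i, 0) := hall _ m2 _ m0
    have h0 := hmem0 i
    have h1 := hmem1 i; rw [e1] at h1
    have h2' := hmem2 i; rw [e2] at h2'
    rcases Finset.mem_union.mp h0 with hA' | hB'
    · rcases Finset.mem_union.mp h1 with hB' | hC'
      · exact Finset.disjoint_left.mp hAB hA' hB'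
      · exact Finset.disjoint_left.mp hAC hA' hC'
    · rcases Finset.mem_union.mp h2' with hA' | hC'
      · exact Finset.disjoint_left.mp hAB hA' hB'
      · exact Finset.disjoint_left.mp hBC hB' hC'
  have hdisj : ∀ i ∈ Finset.univ, ∀ j ∈ Finset.univ, i ≠ j → Disjoint (S i) (S j) := by
    intro i _ j _ hij
    rw [Finset.disjoint_left]
    intro x hxi hxj
    simp only [hS, Finset.mem_insert, Finset.mem_singleton] at hxi hxj
    have adj : ∀ a b : Fin 3, (K3k k).Adj (i, a) (j, b) := fun a b => hij
    rcases hxi with h | h | h <;> rcases hxj with h' | h' | h' <;>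
      exact hprop _ _ (adj _ _) (h ▸ h')
  have hcard : (Finset.univ.biUnion S).card = ∑ i, (S i).card :=
    Finset.card_biUnion hdisj
  have hge : 2 * k ≤ (Finset.univ.biUnion S).card := by
    rw [hcard]
    calc 2 * k = ∑ _i : Fin k, 2 := by simp [Finset.sum_const, mul_comm]
      _ ≤ ∑ i, (S i).card := Finset.sum_le_sum fun i _ => h2 i
  have hsub : Finset.univ.biUnion S ⊆ A ∪ B ∪ C := by
    intro x hx
    obtain ⟨i, _, hxi⟩ := Finset.mem_biUnion.mp hx
    simp only [hS, Finset.mem_insert, Finset.mem_singleton] at hxi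
    have hABC : ∀ y, y ∈ A ∪ B ∨ y ∈ B ∪ C ∨ y ∈ A ∪ C → x = y → x ∈ A ∪ B ∪ C := by
      rintro y hy rfl
      rcases hy with hy | hy | hy <;> rcases Finset.mem_union.mp hy with h | h
      · exact Finset.mem_union_left _ (Finset.mem_union_left _ h)
      · exact Finset.mem_union_left _ (Finset.mem_union_right _ h)
      · exact Finset.mem_union_left _ (Finset.mem_union_right _ h)
      · exact Finset.mem_union_right _ h
      · exact Finset.mem_union_left _ (Finset.mem_union_left _ h)
      · exact Finset.mem_union_right _ h
    rcases hxi with h | h | h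
    · exact hABC _ (Or.inl (hmem0 i)) h
    · exact hABC _ (Or.inr (Or.inl (hmem1 i))) h
    · exact hABC _ (Or.inr (Or.inr (hmem2 i))) h
  have h1 := Finset.card_le_card hsub
  have h2' := (Finset.card_union_le (A ∪ B) C)
  have h3 := (Finset.card_union_le A B)
  omega

/-- Lower bound of Erdős, Rubin and Taylor: `ch(K_{3⋆k}) ≥ ⌈(4k - 1)/3⌉`.  Concretely,
with `q = ⌈(4k - 1)/3⌉ - 1` and pairwise disjoint colour sets `A`, `B`, `C` with
`|A| = ⌊q/2⌋` and `|B| = |C| = ⌈q/2⌉`, the list assignment giving the three vertices of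
each part the lists `A ∪ B`, `B ∪ C` and `A ∪ C` respectively has all lists of size at
least `q` and admits no proper colouring from the lists. -/
theorem choiceNumber_K3k_lower (k : ℕ) (hk : 0 < k) :
    (4 * k - 1) ⌈/⌉ 3 ≤ choiceNumber (K3k k) ∧
    ∀ q : ℕ, q = (4 * k - 1) ⌈/⌉ 3 - 1 →
      ∀ A B C : Finset ℕ, Disjoint A B → Disjoint A C → Disjoint B C →
        A.card = q / 2 → B.card = (q + 1) / 2 → C.card = (q + 1) / 2 →
        ∀ L : Fin k × Fin 3 → Finset ℕ,
          L = (fun v => if v.2 = 0 then A ∪ B else if v.2 = 1 then B ∪ C else A ∪ C) →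
          (∀ v, q ≤ (L v).card) ∧
          ¬ ∃ c : Fin k × Fin 3 → ℕ,
              (∀ v, c v ∈ L v) ∧ ∀ u v, (K3k k).Adj u v → c u ≠ c v := by
  have hNval : (4 * k - 1) ⌈/⌉ 3 = (4 * k + 1) / 3 := by
    rw [Nat.ceilDiv_eq_add_pred_div]
    congr 1
    omega
  set N := (4 * k - 1) ⌈/⌉ 3 with hN
  have harith : (N - 1) / 2 + (N - 1 + 1) / 2 + (N - 1 + 1) / 2 < 2 * k := by
    rcases Nat.even_or_odd (N - 1) with ⟨m, hm⟩ | ⟨m, hm⟩ <;> omega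
  constructor
  · refine le_csInf ⟨Fintype.card (Fin k × Fin 3), choosable_card _⟩ ?_
    intro b hb
    by_contra hlt
    push_neg at hlt
    set q := N - 1 with hqdef
    have hbq : b ≤ q := by omega
    set a := q / 2 with ha
    set b2 := (q + 1) / 2 with hb2
    set A := Finset.range a with hAdef
    set B := Finset.Ico a (a + b2) with hBdef
    set C := Finset.Ico (a + b2) (a + b2 + b2) with hCdef
    have hAB : Disjoint A B := by
      rw [Finset.disjoint_left]; intro x hx hx'
      simp only [hAdef, hBdef, Finset.mem_range, Finset.mem_Ico] at hx hx'; omega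
    have hAC : Disjoint A C := by
      rw [Finset.disjoint_left]; intro x hx hx'
      simp only [hAdef, hCdef, Finset.mem_range, Finset.mem_Ico] at hx hx'; omega
    have hBC : Disjoint B C := by
      rw [Finset.disjoint_left]; intro x hx hx'
      simp only [hBdef, hCdef, Finset.mem_Ico] at hx hx'; omega
    have hcA : A.card = q / 2 := by simp [hAdef, ha]
    have hcB : B.card = (q + 1) / 2 := by simp [hBdef, Nat.card_Ico, hb2]
    have hcC : C.card = (q + 1) / 2 := by simp [hCdef, Nat.card_Ico, hb2]
    set L : Fin k × Fin 3 → Finset ℕ :=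
      fun v => if v.2 = 0 then A ∪ B else if v.2 = 1 then B ∪ C else A ∪ C with hLdef
    have hLcard : ∀ v, b ≤ (L v).card := by
      intro v
      have : q ≤ (L v).card := by
        simp only [hLdef]
        split_ifs
        · rw [Finset.card_union_of_disjoint hAB]; omega
        · rw [Finset.card_union_of_disjoint hBC]; omega
        · rw [Finset.card_union_of_disjoint hAC]; omega
      omega
    choose L' hsub hcard using fun v => Finset.exists_subset_card_eq (hLcard v)
    obtain ⟨c, hc, hprop⟩ := hb L' hcard
    exact K3k_no_colouring k q harith A B C hAB hAC hBC hcA hcB hcC L hLdef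
      ⟨c, fun v => hsub v (hc v), hprop⟩
  · intro q hq A B C hAB hAC hBC hcA hcB hcC L hL
    have hq' : q = N - 1 := hq
    constructor
    · intro v
      subst hL
      simp only
      split_ifs
      · rw [Finset.card_union_of_disjoint hAB]; omega
      · rw [Finset.card_union_of_disjoint hBC]; omega
      · rw [Finset.card_union_of_disjoint hAC]; omega
    · exact K3k_no_colouring k q (by omega) A B C hAB hAC hBC hcA hcB hcC L hL
end

section
/- Let H be a finite simple graph, f : V(H) → ℕ, and let v ∈ V(H) be a vertex with f(v) ≥ d_H(v) + 1, where d_H(v) is the degree of v in H. Then H is on-line f-choosable if and only if H − v is on-line f-choosable (with f restricted to V(H) − v). -/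
variable {V : Type} [Fintype V] [DecidableEq V]

set_option linter.unusedSectionVars false

lemma aux_succ {G : SimpleGraph V} {n : ℕ} {S : Finset V} {f : V → ℕ} :
    OnlineChoosableAux G (n + 1) S f ↔
      ((∀ u ∈ S, ∀ v ∈ S, ¬ G.Adj u v) ∧ ∀ v ∈ S, 1 ≤ f v) ∨
      ((∃ u ∈ S, ∃ v ∈ S, G.Adj u v) ∧
        ∀ U : Finset V, U ⊆ S → U.Nonempty →
          ∃ I : Finset V, I ⊆ U ∧ (∀ u ∈ I, ∀ v ∈ I, ¬ G.Adj u v) ∧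
            OnlineChoosableAux G n (S \ I) (fun v => f v - if v ∈ U then 1 else 0)) :=
  Iff.rfl

lemma aux_mono_n {G : SimpleGraph V} :
    ∀ {n : ℕ} {S : Finset V} {f : V → ℕ},
    OnlineChoosableAux G n S f → OnlineChoosableAux G (n + 1) S f := by
  intro n
  induction n with
  | zero => intro S f h; exact h.elim
  | succ n ih =>
    intro S f h
    rcases aux_succ.mp h with ⟨h1, h2⟩ | ⟨he, hstr⟩
    · exact aux_succ.mpr (Or.inl ⟨h1, h2⟩)
    · refine aux_succ.mpr (Or.inr ⟨he, fun U hU hUne => ?_⟩)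
      obtain ⟨I, hI, hind, haux⟩ := hstr U hU hUne
      exact ⟨I, hI, hind, ih haux⟩

lemma aux_mono_le {G : SimpleGraph V} {n m : ℕ} {S : Finset V} {f : V → ℕ} (h : n ≤ m)
    (ha : OnlineChoosableAux G n S f) : OnlineChoosableAux G m S f := by
  induction h with
  | refl => exact ha
  | step _ ih => exact aux_mono_n ih

lemma aux_mono_f {G : SimpleGraph V} :
    ∀ {n : ℕ} {S : Finset V} {f g : V → ℕ},
    (∀ u ∈ S, f u ≤ g u) → OnlineChoosableAux G n S f → OnlineChoosableAux G n S g := by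
  intro n
  induction n with
  | zero => intro S f g _ h; exact h.elim
  | succ n ih =>
    intro S f g hfg h
    rcases aux_succ.mp h with ⟨h1, h2⟩ | ⟨he, hstr⟩
    · exact aux_succ.mpr (Or.inl ⟨h1, fun u hu => le_trans (h2 u hu) (hfg u hu)⟩)
    · refine aux_succ.mpr (Or.inr ⟨he, fun U hU hUne => ?_⟩)
      obtain ⟨I, hI, hind, haux⟩ := hstr U hU hUne
      refine ⟨I, hI, hind, ih (fun u hu => ?_) haux⟩
      exact Nat.sub_le_sub_right (hfg u (Finset.mem_sdiff.mp hu).1) _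

lemma aux_congr_f {G : SimpleGraph V} {n : ℕ} {S : Finset V} {f g : V → ℕ}
    (h : ∀ u ∈ S, f u = g u)
    (ha : OnlineChoosableAux G n S f) : OnlineChoosableAux G n S g :=
  aux_mono_f (fun u hu => (h u hu).le) ha

lemma aux_one_le {G : SimpleGraph V} :
    ∀ {n : ℕ} {S : Finset V} {f : V → ℕ},
    OnlineChoosableAux G n S f → ∀ u ∈ S, 1 ≤ f u := by
  intro n
  induction n with
  | zero => intro S f h; exact h.elim
  | succ n ih =>
    intro S f h u hu
    rcases aux_succ.mp h with ⟨_, h2⟩ | ⟨⟨x, hx, y, hy, hxy⟩, hstr⟩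
    · exact h2 u hu
    · have hxy' : x ≠ y := G.ne_of_adj hxy
      obtain ⟨w, hwS, hwu⟩ : ∃ w ∈ S, w ≠ u := by
        by_cases hx' : x = u
        · exact ⟨y, hy, fun h => hxy' (by rw [hx', h])⟩
        · exact ⟨x, hx, hx'⟩
      obtain ⟨I, hI, _, haux⟩ := hstr {w} (Finset.singleton_subset_iff.mpr hwS)
        ⟨w, Finset.mem_singleton_self w⟩
      have hu' : u ∈ S \ I := Finset.mem_sdiff.mpr ⟨hu, fun hui =>
        hwu (Finset.mem_singleton.mp (hI hui)).symm⟩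
      have := ih haux u hu'
      simpa [Finset.mem_singleton, Ne.symm hwu] using this

lemma aux_subset {G : SimpleGraph V} :
    ∀ {n : ℕ} {S T : Finset V} {f : V → ℕ}, T ⊆ S →
    OnlineChoosableAux G n S f → OnlineChoosableAux G n T f := by
  intro n
  induction n with
  | zero => intro S T f _ h; exact h.elim
  | succ n ih =>
    intro S T f hTS h
    rcases aux_succ.mp h with ⟨h1, h2⟩ | ⟨he, hstr⟩
    · exact aux_succ.mpr (Or.inl ⟨fun u hu w hw => h1 u (hTS hu) w (hTS hw),
        fun u hu => h2 u (hTS hu)⟩)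
    · by_cases hTe : ∃ u ∈ T, ∃ w ∈ T, G.Adj u w
      · refine aux_succ.mpr (Or.inr ⟨hTe, fun U hU hUne => ?_⟩)
        obtain ⟨I, hI, hind, haux⟩ := hstr U (hU.trans hTS) hUne
        exact ⟨I, hI, hind, ih (Finset.sdiff_subset_sdiff hTS (Finset.Subset.refl I)) haux⟩
      · exact aux_succ.mpr (Or.inl ⟨fun u hu w hw hadj => hTe ⟨u, hu, w, hw, hadj⟩,
          fun u hu => aux_one_le h u (hTS hu)⟩)

/-- Degree of `v` inside `S`. -/
def degIn (G : SimpleGraph V) [DecidableRel G.Adj] (S : Finset V) (v : V) : ℕ :=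
  (S.filter (G.Adj v)).card

lemma degIn_mono {G : SimpleGraph V} [DecidableRel G.Adj] {S T : Finset V} {v : V}
    (hTS : T ⊆ S) : degIn G T v ≤ degIn G S v :=
  Finset.card_le_card (Finset.filter_subset_filter _ hTS)

lemma degIn_lt {G : SimpleGraph V} [DecidableRel G.Adj] {S T : Finset V} {v w : V}
    (hTS : T ⊆ S) (hw : w ∈ S) (hw' : w ∉ T) (hadj : G.Adj v w) :
    degIn G T v < degIn G S v := by
  refine Finset.card_lt_card ?_
  refine (Finset.ssubset_iff_of_subset (Finset.filter_subset_filter _ hTS)).mpr ?_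
  exact ⟨w, Finset.mem_filter.mpr ⟨hw, hadj⟩, fun h => hw' (Finset.mem_filter.mp h).1⟩

lemma aux_insert {G : SimpleGraph V} [DecidableRel G.Adj] :
    ∀ (m : ℕ) (n : ℕ) (S : Finset V) (f : V → ℕ) (v : V),
    v ∈ S → degIn G S v + 1 ≤ f v →
    OnlineChoosableAux G n (S.erase v) f →
    n + f v + S.card ≤ m → OnlineChoosableAux G m S f := by
  intro m
  induction m using Nat.strong_induction_on with
  | _ m IH =>
  intro n S f v hvS hdeg haux hm
  obtain ⟨n₀, rfl⟩ : ∃ n₀, n = n₀ + 1 := by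
    cases n with
    | zero => exact haux.elim
    | succ k => exact ⟨k, rfl⟩
  have hfv : 1 ≤ f v := by omega
  have hScard : 1 ≤ S.card := Finset.card_pos.mpr ⟨v, hvS⟩
  obtain ⟨m', rfl⟩ : ∃ m', m = m' + 1 := ⟨m - 1, by omega⟩
  by_cases hSe : ∃ x ∈ S, ∃ y ∈ S, G.Adj x y
  · refine aux_succ.mpr (Or.inr ⟨hSe, fun U hU hUne => ?_⟩)
    by_cases hvU : v ∈ U
    · by_cases hU' : (U.erase v).Nonempty
      · have hU'S : U.erase v ⊆ S.erase v := Finset.erase_subset_erase v hU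
        rcases aux_succ.mp haux with ⟨hfl, hge⟩ | ⟨_, hstr⟩
        · -- S.erase v is edgeless
          by_cases hnb : ∃ w ∈ U.erase v, G.Adj v w
          · obtain ⟨w, hwU', hvw⟩ := hnb
            have hwS : w ∈ S := Finset.mem_of_mem_erase (hU'S hwU')
            refine ⟨U.erase v, Finset.erase_subset v U,
              fun a ha b hb => hfl a (hU'S ha) b (hU'S hb), ?_⟩
            have hwnot : w ∉ S \ U.erase v := fun h => (Finset.mem_sdiff.mp h).2 hwU'
            have hdlt : degIn G (S \ U.erase v) v < degIn G S v :=
              degIn_lt Finset.sdiff_subset hwS hwnot hvw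
            have hclt : (S \ U.erase v).card < S.card :=
              Finset.card_lt_card ((Finset.ssubset_iff_of_subset Finset.sdiff_subset).mpr
                ⟨w, hwS, hwnot⟩)
            refine IH m' (Nat.lt_succ_self m') 1 _ _ v
              (Finset.mem_sdiff.mpr ⟨hvS, Finset.notMem_erase v U⟩) ?_ ?_ ?_
            · simp only [if_pos hvU]; omega
            · refine aux_succ.mpr (Or.inl ⟨fun a ha b hb => ?_, fun a ha => ?_⟩)
              · have ha' : a ∈ S.erase v := by
                  rw [Finset.mem_erase] at ha ⊢
                  exact ⟨ha.1, (Finset.mem_sdiff.mp ha.2).1⟩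
                have hb' : b ∈ S.erase v := by
                  rw [Finset.mem_erase] at hb ⊢
                  exact ⟨hb.1, (Finset.mem_sdiff.mp hb.2).1⟩
                exact hfl a ha' b hb'
              · rw [Finset.mem_erase, Finset.mem_sdiff] at ha
                have haU : a ∉ U := fun h =>
                  ha.2.2 (Finset.mem_erase.mpr ⟨ha.1, h⟩)
                rw [if_neg haU]
                simpa using hge a (Finset.mem_erase.mpr ⟨ha.1, ha.2.1⟩)
            · simp only [if_pos hvU]; omega
          · -- v has no neighbour in U.erase v; take I = U
            refine ⟨U, Finset.Subset.refl U, ?_, ?_⟩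
            · intro a ha b hb hadj
              by_cases hav : a = v
              · rw [hav] at hadj
                by_cases hbv : b = v
                · rw [hbv] at hadj; exact G.irrefl hadj
                · exact hnb ⟨b, Finset.mem_erase.mpr ⟨hbv, hb⟩, hadj⟩
              · by_cases hbv : b = v
                · rw [hbv] at hadj
                  exact hnb ⟨a, Finset.mem_erase.mpr ⟨hav, ha⟩, hadj.symm⟩
                · exact hfl a (hU'S (Finset.mem_erase.mpr ⟨hav, ha⟩))
                    b (hU'S (Finset.mem_erase.mpr ⟨hbv, hb⟩)) hadj
            · refine aux_mono_le (n := 1) (by omega) ?_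
              refine aux_succ.mpr (Or.inl ⟨fun a ha b hb => ?_, fun a ha => ?_⟩)
              · rw [Finset.mem_sdiff] at ha hb
                have hav : a ≠ v := fun h => ha.2 (h ▸ hvU)
                have hbv : b ≠ v := fun h => hb.2 (h ▸ hvU)
                exact hfl a (Finset.mem_erase.mpr ⟨hav, ha.1⟩)
                  b (Finset.mem_erase.mpr ⟨hbv, hb.1⟩)
              · rw [Finset.mem_sdiff] at ha
                have hav : a ≠ v := fun h => ha.2 (h ▸ hvU)
                rw [if_neg ha.2]
                simpa using hge a (Finset.mem_erase.mpr ⟨hav, ha.1⟩)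
        · -- strategy on S.erase v
          obtain ⟨I, hIU', hIind, haux₂⟩ := hstr (U.erase v) hU'S hU'
          have hvI : v ∉ I := fun h => Finset.notMem_erase v U (hIU' h)
          have hIS : ∀ a ∈ I, a ∈ S.erase v := fun a ha => hU'S (hIU' ha)
          by_cases hnb : ∃ w ∈ I, G.Adj v w
          · obtain ⟨w, hwI, hvw⟩ := hnb
            refine ⟨I, hIU'.trans (Finset.erase_subset v U), hIind, ?_⟩
            have hwS : w ∈ S := Finset.mem_of_mem_erase (hIS w hwI)
            have hwnot : w ∉ S \ I := fun h => (Finset.mem_sdiff.mp h).2 hwI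
            have hdlt : degIn G (S \ I) v < degIn G S v :=
              degIn_lt Finset.sdiff_subset hwS hwnot hvw
            have hcle : (S \ I).card ≤ S.card := Finset.card_le_card Finset.sdiff_subset
            have hseteq : (S \ I).erase v = (S.erase v) \ I := by
              ext a
              simp only [Finset.mem_erase, Finset.mem_sdiff]
              tauto
            refine IH m' (Nat.lt_succ_self m') n₀ _ _ v
              (Finset.mem_sdiff.mpr ⟨hvS, hvI⟩) ?_ ?_ ?_
            · simp only [if_pos hvU]; omega
            · rw [hseteq]
              refine aux_congr_f (fun a ha => ?_) haux₂
              rw [Finset.mem_sdiff, Finset.mem_erase] at ha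
              have : a ∈ U.erase v ↔ a ∈ U := by
                rw [Finset.mem_erase]
                exact ⟨fun h => h.2, fun h => ⟨ha.1.1, h⟩⟩
              simp only [this]
            · simp only [if_pos hvU]; omega
          · -- v joins the independent set
            refine ⟨insert v I, ?_, ?_, ?_⟩
            · intro a ha
              rcases Finset.mem_insert.mp ha with rfl | haI
              · exact hvU
              · exact Finset.erase_subset v U (hIU' haI)
            · intro a ha b hb hadj
              rcases Finset.mem_insert.mp ha with rfl | haI
              · rcases Finset.mem_insert.mp hb with rfl | hbI
                · exact G.irrefl hadj
                · exact hnb ⟨b, hbI, hadj⟩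
              · rcases Finset.mem_insert.mp hb with rfl | hbI
                · exact hnb ⟨a, haI, hadj.symm⟩
                · exact hIind a haI b hbI hadj
            · have hseteq : S \ insert v I = (S.erase v) \ I := by
                ext a
                simp only [Finset.mem_sdiff, Finset.mem_insert, Finset.mem_erase]
                tauto
              rw [hseteq]
              refine aux_mono_le (by omega) (aux_congr_f (fun a ha => ?_) haux₂)
              rw [Finset.mem_sdiff, Finset.mem_erase] at ha
              have : a ∈ U.erase v ↔ a ∈ U := by
                rw [Finset.mem_erase]
                exact ⟨fun h => h.2, fun h => ⟨ha.1.1, h⟩⟩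
              simp only [this]
      · -- U = {v}
        have hUv : U = {v} := by
          ext a
          simp only [Finset.mem_singleton]
          constructor
          · intro ha
            by_contra hav
            exact hU' ⟨a, Finset.mem_erase.mpr ⟨hav, ha⟩⟩
          · rintro rfl; exact hvU
        refine ⟨{v}, by rw [hUv], ?_, ?_⟩
        · intro a ha b hb hadj
          rw [Finset.mem_singleton] at ha hb
          subst ha; subst hb
          exact G.irrefl hadj
        · have hseteq : S \ {v} = S.erase v := by
            ext a
            simp only [Finset.mem_sdiff, Finset.mem_singleton, Finset.mem_erase]
            tauto
          rw [hseteq]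
          refine aux_mono_le (by omega) (aux_congr_f (fun a ha => ?_) haux)
          have hav : a ≠ v := (Finset.mem_erase.mp ha).1
          rw [if_neg (by simpa [hUv])]
          omega
    · -- v ∉ U
      have hUS' : U ⊆ S.erase v := fun a ha =>
        Finset.mem_erase.mpr ⟨fun h => hvU (h ▸ ha), hU ha⟩
      obtain ⟨u₀, hu₀⟩ := hUne
      have hu₀S : u₀ ∈ S := hU hu₀
      have hclt : (S \ U).card < S.card :=
        Finset.card_lt_card ((Finset.ssubset_iff_of_subset Finset.sdiff_subset).mpr
          ⟨u₀, hu₀S, fun h => (Finset.mem_sdiff.mp h).2 hu₀⟩)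
      rcases aux_succ.mp haux with ⟨hfl, hge⟩ | ⟨_, hstr⟩
      · -- S.erase v edgeless: take I = U
        refine ⟨U, Finset.Subset.refl U,
          fun a ha b hb => hfl a (hUS' ha) b (hUS' hb), ?_⟩
        refine IH m' (Nat.lt_succ_self m') 1 _ _ v
          (Finset.mem_sdiff.mpr ⟨hvS, hvU⟩) ?_ ?_ ?_
        · rw [if_neg hvU]
          have := degIn_mono (G := G) (v := v) (Finset.sdiff_subset (s := S) (t := U))
          omega
        · refine aux_succ.mpr (Or.inl ⟨fun a ha b hb => ?_, fun a ha => ?_⟩)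
          · rw [Finset.mem_erase, Finset.mem_sdiff] at ha hb
            exact hfl a (Finset.mem_erase.mpr ⟨ha.1, ha.2.1⟩)
              b (Finset.mem_erase.mpr ⟨hb.1, hb.2.1⟩)
          · rw [Finset.mem_erase, Finset.mem_sdiff] at ha
            rw [if_neg ha.2.2]
            simpa using hge a (Finset.mem_erase.mpr ⟨ha.1, ha.2.1⟩)
        · rw [if_neg hvU]; omega
      · obtain ⟨I, hIU, hIind, haux₂⟩ := hstr U hUS' ⟨u₀, hu₀⟩
        refine ⟨I, hIU, hIind, ?_⟩
        have hvI : v ∉ I := fun h => hvU (hIU h)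
        have hcle : (S \ I).card ≤ S.card := Finset.card_le_card Finset.sdiff_subset
        have hseteq : (S \ I).erase v = (S.erase v) \ I := by
          ext a
          simp only [Finset.mem_erase, Finset.mem_sdiff]
          tauto
        refine IH m' (Nat.lt_succ_self m') n₀ _ _ v
          (Finset.mem_sdiff.mpr ⟨hvS, hvI⟩) ?_ ?_ ?_
        · rw [if_neg hvU]
          have := degIn_mono (G := G) (v := v) (Finset.sdiff_subset (s := S) (t := I))
          omega
        · rw [hseteq]; exact haux₂
        · rw [if_neg hvU]; omega
  · -- S edgeless
    refine aux_succ.mpr (Or.inl ⟨fun a ha b hb hadj => hSe ⟨a, ha, b, hb, hadj⟩,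
      fun a ha => ?_⟩)
    rcases eq_or_ne a v with rfl | hav
    · omega
    · exact aux_one_le haux a (Finset.mem_erase.mpr ⟨hav, ha⟩)

/-- Deleting a vertex with `f(v) ≥ d_H(v) + 1` does not affect on-line `f`-choosability:
`H` is on-line `f`-choosable iff `H - v` is. -/
theorem onlineChoosable_erase_iff (H : SimpleGraph V) [DecidableRel H.Adj]
    (f : V → ℕ) (v : V) (hdeg : H.degree v + 1 ≤ f v) :
    OnlineChoosable H Finset.univ f ↔ OnlineChoosable H (Finset.univ.erase v) f := by
  have hdeg' : degIn H Finset.univ v + 1 ≤ f v := by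
    have : degIn H Finset.univ v = H.degree v := by
      rw [degIn, SimpleGraph.degree, SimpleGraph.neighborFinset_eq_filter]
    rwa [this]
  constructor
  · rintro ⟨n, h⟩
    exact ⟨n, aux_subset (Finset.erase_subset v _) h⟩
  · rintro ⟨n, h⟩
    exact ⟨n + f v + Finset.univ.card,
      aux_insert _ n Finset.univ f v (Finset.mem_univ v) hdeg' h le_rfl⟩
end
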